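/- arXiv:2205.06228 — 7 statements merged into one kernel-verified Lean document; each statement's English description precedes it below -/
import Mathlib

section
/- If X_1, ..., X_n are negatively associated, and f_1, ..., f_m are monotonically increasing functions defined on pairwise disjoint subsets of the variables X_1, ..., X_n, then the random variables f_1, ..., f_m (evaluated on their respective subsets of the X's) are negatively associated. -/
open MeasureTheory in
/-- Random variables `X i` are negatively associated under `μ`: for any disjoint index sets
`I, J` and any two concordant monotone functions `f, g`,
`E[f(X_I) g(X_J)] ≤ E[f(X_I)] E[g(X_J)]`. -/
def NegAssoc {Ω ι : Type*} [MeasurableSpace Ω] (μ : Measure Ω) (X : ι → Ω → ℝ) : Prop :=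
  ∀ (I J : Finset ι), Disjoint I J →
    ∀ (f : (↥I → ℝ) → ℝ) (g : (↥J → ℝ) → ℝ),
      ((Monotone f ∧ Monotone g) ∨ (Antitone f ∧ Antitone g)) →
      (∫ ω, f (fun i => X i.1 ω) * g (fun j => X j.1 ω) ∂μ) ≤
        (∫ ω, f (fun i => X i.1 ω) ∂μ) * (∫ ω, g (fun j => X j.1 ω) ∂μ)

open MeasureTheory

/-- Monotone increasing functions defined on pairwise disjoint subsets of a set of
negatively associated random variables are negatively associated. -/
theorem negAssoc_comp_monotone_disjoint {Ω ι : Type*} [MeasurableSpace Ω]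
    (μ : Measure Ω) [IsProbabilityMeasure μ]
    (X : ι → Ω → ℝ) (hX : NegAssoc μ X)
    (m : ℕ) (A : Fin m → Finset ι)
    (hA : ∀ s t : Fin m, s ≠ t → Disjoint (A s) (A t))
    (f : (s : Fin m) → ((↥(A s) → ℝ) → ℝ))
    (hf : ∀ s, Monotone (f s)) :
    NegAssoc μ (fun s ω => f s (fun i => X i.1 ω)) := by
  classical
  intro I J hIJ g h hgh
  have hdis : Disjoint (I.biUnion A) (J.biUnion A) := by
    simp only [Finset.disjoint_biUnion_left, Finset.disjoint_biUnion_right]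
    intro s hs t ht
    exact hA t s (fun e => Finset.disjoint_left.mp hIJ ht (e.symm ▸ hs))
  let T : (↥(I.biUnion A) → ℝ) → (↥I → ℝ) := fun x s =>
    f s.1 (fun i => x ⟨i.1, Finset.mem_biUnion.mpr ⟨s.1, s.2, i.2⟩⟩)
  let U : (↥(J.biUnion A) → ℝ) → (↥J → ℝ) := fun x s =>
    f s.1 (fun i => x ⟨i.1, Finset.mem_biUnion.mpr ⟨s.1, s.2, i.2⟩⟩)
  have hT : Monotone T := fun x y hxy s => hf s.1 (fun i => hxy _)
  have hU : Monotone U := fun x y hxy s => hf s.1 (fun i => hxy _)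
  have hcase : (Monotone (g ∘ T) ∧ Monotone (h ∘ U)) ∨
      (Antitone (g ∘ T) ∧ Antitone (h ∘ U)) := by
    rcases hgh with ⟨hg, hh⟩ | ⟨hg, hh⟩
    · exact Or.inl ⟨hg.comp hT, hh.comp hU⟩
    · exact Or.inr ⟨hg.comp_monotone hT, hh.comp_monotone hU⟩
  exact hX (I.biUnion A) (J.biUnion A) hdis (g ∘ T) (h ∘ U) hcase
end

section
/- Let x = (x_1, ..., x_n) be a fixed real vector and let X = (X_1, ..., X_n) be a random vector uniformly distributed over all n! permutations of x. Then X_1, ..., X_n are negatively associated. -/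
/-!
Condition on the set `A = σ(I)` of values that `σ` puts on the positions in `I`. Given `A`, the
restrictions of `σ` to `I` and to `J` are independent, and `A` is a uniform `#I`-subset, so
`E[f g]` is the mean of `Φ(A) Ψ(A)`, where `Φ(A)` and `Ψ(A)` are the conditional means of `f` and
`g`. Composing `σ` with the transposition `(a b)`, for `a ∈ A`, `b ∉ A` and `x a ≤ x b`, shows
that this exchange increases `Φ` and decreases `Ψ`. It remains to show that two exchange-monotone
functions of a uniform `k`-subset are positively correlated. Split the subsets according to whether
they contain the element `p` of largest value: inside each block use induction, and compare the
means of the two blocks by double counting, since replacing any element by `p` is an upward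
exchange. The antitone case is the monotone one for the reversed order.
-/

open Finset Equiv MeasureTheory

variable {α β : Type*} [DecidableEq α]

theorem Finset.sum_sum_erase_powersetCard {M : Type*} [AddCommMonoid M] (S : Finset α) (k : ℕ)
    (w : Finset α → M) :
    ∑ C ∈ S.powersetCard (k + 1), ∑ c ∈ C, w (C.erase c) =
      ∑ B ∈ S.powersetCard k, ∑ _c ∈ S \ B, w B := by
  rw [sum_sigma', sum_sigma']
  refine sum_nbij' (fun p => ⟨p.1.erase p.2, p.2⟩) (fun p => ⟨insert p.2 p.1, p.2⟩)
    ?_ ?_ ?_ ?_ (fun _ _ => rfl)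
  · rintro ⟨C, c⟩ h
    simp only [mem_sigma, mem_powersetCard] at h ⊢
    refine ⟨⟨(erase_subset c C).trans h.1.1, by rw [card_erase_of_mem h.2, h.1.2]; rfl⟩, ?_⟩
    exact mem_sdiff.2 ⟨h.1.1 h.2, notMem_erase c C⟩
  · rintro ⟨B, c⟩ h
    simp only [mem_sigma, mem_powersetCard, mem_sdiff] at h ⊢
    exact ⟨⟨insert_subset h.2.1 h.1.1, by rw [card_insert_of_notMem h.2.2, h.1.2]⟩,
      mem_insert_self c B⟩
  · rintro ⟨C, c⟩ h
    rw [mem_sigma] at h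
    simp [insert_erase h.2]
  · rintro ⟨B, c⟩ h
    rw [mem_sigma, mem_sdiff] at h
    simp [erase_insert h.2.2]

/-- Chebyshev's sum inequality on `s ∪ t` from the inequalities on `s` and on `t`, when the means
of `f` and of `g` on the two blocks are ordered the same way (law of total covariance). -/
theorem Finset.sum_mul_sum_le_card_mul_sum_union {ι : Type*} [DecidableEq ι] {s t : Finset ι}
    (hst : Disjoint s t) {f g : ι → ℝ}
    (hs : (∑ i ∈ s, f i) * (∑ i ∈ s, g i) ≤ #s * ∑ i ∈ s, f i * g i)
    (ht : (∑ i ∈ t, f i) * (∑ i ∈ t, g i) ≤ #t * ∑ i ∈ t, f i * g i)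
    (hf : #t * ∑ i ∈ s, f i ≤ #s * ∑ i ∈ t, f i) (hg : #t * ∑ i ∈ s, g i ≤ #s * ∑ i ∈ t, g i) :
    (∑ i ∈ s ∪ t, f i) * (∑ i ∈ s ∪ t, g i) ≤ #(s ∪ t) * ∑ i ∈ s ∪ t, f i * g i := by
  rcases s.eq_empty_or_nonempty with rfl | hs₀
  · simpa using ht
  rcases t.eq_empty_or_nonempty with rfl | ht₀
  · simpa using hs
  rw [sum_union hst, sum_union hst, sum_union hst, card_union_of_disjoint hst, Nat.cast_add]
  have hm₀ : (0 : ℝ) < #s := by exact_mod_cast hs₀.card_pos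
  have hm₁ : (0 : ℝ) < #t := by exact_mod_cast ht₀.card_pos
  refine le_of_mul_le_mul_left ?_ (mul_pos hm₀ hm₁)
  nlinarith [mul_nonneg (sub_nonneg.2 hf) (sub_nonneg.2 hg), mul_le_mul_of_nonneg_left hs
    (mul_nonneg hm₁.le (add_pos hm₀ hm₁).le), mul_le_mul_of_nonneg_left ht
    (mul_nonneg hm₀.le (add_pos hm₀ hm₁).le)]

def ExchangeMonotoneOn [Preorder β] (x : α → β) (S : Finset α) (Φ : Finset α → ℝ) : Prop :=
  ∀ ⦃A a b⦄, A ⊆ S → a ∈ A → b ∈ S → b ∉ A → x a ≤ x b → Φ A ≤ Φ (insert b (A.erase a))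

namespace ExchangeMonotoneOn

variable [LinearOrder β] {x : α → β} {S : Finset α} {Φ Ψ : Finset α → ℝ} {p : α}

theorem mono (hΦ : ExchangeMonotoneOn x S Φ) {T : Finset α} (hTS : T ⊆ S) :
    ExchangeMonotoneOn x T Φ :=
  fun _ _ _ hA ha hb => hΦ (hA.trans hTS) ha (hTS hb)

theorem comp_insert (hΦ : ExchangeMonotoneOn x (insert p S) Φ) (hp : p ∉ S) :
    ExchangeMonotoneOn x S (fun B => Φ (insert p B)) := by
  intro A a b hA ha hb hbA hab
  have hpa : p ≠ a := fun h => hp (h ▸ hA ha)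
  have hbp : b ≠ p := fun h => hp (h ▸ hb)
  have h := hΦ (insert_subset_insert p hA) (mem_insert_of_mem ha) (mem_insert_of_mem hb)
    (by simp [hbp, hbA]) hab
  rwa [erase_insert_of_ne hpa, insert_comm] at h

theorem card_mul_sum_le (hΦ : ExchangeMonotoneOn x (insert p S) Φ) (hp : p ∉ S)
    (hmax : ∀ b ∈ S, x b ≤ x p) (k : ℕ) :
    #(S.powersetCard k) * ∑ C ∈ S.powersetCard (k + 1), Φ C ≤
      #(S.powersetCard (k + 1)) * ∑ B ∈ S.powersetCard k, Φ (insert p B) := by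
  have hcount : ((k + 1 : ℕ) : ℝ) * ∑ C ∈ S.powersetCard (k + 1), Φ C ≤
      ((#S - k : ℕ) : ℝ) * ∑ B ∈ S.powersetCard k, Φ (insert p B) := calc
    _ = ∑ C ∈ S.powersetCard (k + 1), ∑ _c ∈ C, Φ C := by
      rw [mul_sum]
      refine sum_congr rfl fun C hC => ?_
      rw [sum_const, (mem_powersetCard.1 hC).2, nsmul_eq_mul]
    _ ≤ ∑ C ∈ S.powersetCard (k + 1), ∑ c ∈ C, Φ (insert p (C.erase c)) := by
      refine sum_le_sum fun C hC => sum_le_sum fun c hc => ?_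
      have hCS := (mem_powersetCard.1 hC).1
      exact hΦ (hCS.trans (subset_insert p S)) hc (mem_insert_self p S)
        (fun h => hp (hCS h)) (hmax c (hCS hc))
    _ = ∑ B ∈ S.powersetCard k, ∑ _c ∈ S \ B, Φ (insert p B) :=
      sum_sum_erase_powersetCard S k (fun B => Φ (insert p B))
    _ = _ := by
      rw [mul_sum]
      refine sum_congr rfl fun B hB => ?_
      obtain ⟨hBS, hBk⟩ := mem_powersetCard.1 hB
      rw [sum_const, card_sdiff_of_subset hBS, hBk, nsmul_eq_mul]
  have hchoose : ((#S).choose (k + 1) : ℝ) * (k + 1 : ℕ) = (#S).choose k * (#S - k : ℕ) := by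
    exact_mod_cast Nat.choose_succ_right_eq (#S) k
  rw [card_powersetCard, card_powersetCard]
  refine le_of_mul_le_mul_left ?_ (by positivity : (0 : ℝ) < (k + 1 : ℕ))
  calc _ = ((#S).choose k : ℝ) * (((k + 1 : ℕ) : ℝ) * ∑ C ∈ S.powersetCard (k + 1), Φ C) := by
        ring
    _ ≤ ((#S).choose k : ℝ) * (((#S - k : ℕ) : ℝ) * ∑ B ∈ S.powersetCard k, Φ (insert p B)) :=
        mul_le_mul_of_nonneg_left hcount (Nat.cast_nonneg _)
    _ = _ := by linear_combination (-∑ B ∈ S.powersetCard k, Φ (insert p B)) * hchoose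

theorem sum_mul_sum_le_card_mul_sum (hΦ : ExchangeMonotoneOn x S Φ)
    (hΨ : ExchangeMonotoneOn x S Ψ) (k : ℕ) :
    (∑ A ∈ S.powersetCard k, Φ A) * (∑ A ∈ S.powersetCard k, Ψ A) ≤
      #(S.powersetCard k) * ∑ A ∈ S.powersetCard k, Φ A * Ψ A := by
  induction S using Finset.induction_on_max_value x generalizing k Φ Ψ with
  | empty =>
    cases k with
    | zero => simp
    | succ k => simp [powersetCard_eq_empty.2 (by simp : #(∅ : Finset α) < k + 1)]
  | insert p S hp hmax ih =>
    cases k with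
    | zero => simp
    | succ k => ?_
    have hinj : Set.InjOn (insert p) (S.powersetCard k : Set (Finset α)) := by
      intro B₁ h₁ B₂ h₂ h
      have hp₁ : p ∉ B₁ := fun h' => hp ((mem_powersetCard.1 h₁).1 h')
      have hp₂ : p ∉ B₂ := fun h' => hp ((mem_powersetCard.1 h₂).1 h')
      rw [← erase_insert hp₁, h, erase_insert hp₂]
    have hsum (w : Finset α → ℝ) :
        ∑ C ∈ (S.powersetCard k).image (insert p), w C = ∑ B ∈ S.powersetCard k, w (insert p B) :=
      sum_image hinj
    have hdisj : Disjoint (S.powersetCard (k + 1)) ((S.powersetCard k).image (insert p)) := by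
      refine disjoint_left.2 fun C hC hC' => ?_
      obtain ⟨B, -, rfl⟩ := mem_image.1 hC'
      exact hp ((mem_powersetCard.1 hC).1 (mem_insert_self p B))
    rw [powersetCard_succ_insert hp]
    refine sum_mul_sum_le_card_mul_sum_union hdisj (ih (hΦ.mono (subset_insert p S))
      (hΨ.mono (subset_insert p S)) (k + 1)) ?_ ?_ ?_ <;>
      simp only [hsum, card_image_of_injOn hinj]
    · exact ih (hΦ.comp_insert hp) (hΨ.comp_insert hp) k
    · exact hΦ.card_mul_sum_le hp hmax k
    · exact hΨ.card_mul_sum_le hp hmax k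

end ExchangeMonotoneOn

theorem le_apply_swap [Preorder β] {x : α → β} {a b c : α} (hab : x a ≤ x b) (hc : c ≠ b) :
    x c ≤ x (swap a b c) := by
  rw [swap_apply_def]
  split_ifs with h <;> simp_all

theorem apply_swap_le [Preorder β] {x : α → β} {a b c : α} (hab : x a ≤ x b) (hc : c ≠ a) :
    x (swap a b c) ≤ x c := by
  rw [swap_apply_def]
  split_ifs with h h' <;> simp_all

theorem Finset.image_swap_of_mem_of_notMem {A : Finset α} {a b : α} (ha : a ∈ A) (hb : b ∉ A) :
    A.image (swap a b) = insert b (A.erase a) := by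
  apply coe_injective
  rw [coe_image, Equiv.image_swap_of_mem_of_notMem ha hb, coe_insert, coe_erase,
    Set.insert_sdiff_of_notMem]
  simpa using (ne_of_mem_of_not_mem ha hb).symm

theorem Equiv.Perm.piecewise_injective {I : Finset α} {σ τ : Perm α} (h : I.image σ = I.image τ) :
    Function.Injective (I.piecewise σ τ) := by
  have hmem (z : α) : I.piecewise σ τ z ∈ I.image σ ↔ z ∈ I := by
    by_cases hz : z ∈ I
    · simp [hz, mem_image_of_mem σ hz]
    · rw [piecewise_eq_of_notMem _ _ _ hz, h, τ.injective.mem_finset_image]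
  intro z w hzw
  have hzw' : z ∈ I ↔ w ∈ I := by rw [← hmem, hzw, hmem]
  by_cases hz : z ∈ I
  · rw [piecewise_eq_of_mem _ _ _ hz, piecewise_eq_of_mem _ _ _ (hzw'.1 hz)] at hzw
    exact σ.injective hzw
  · rw [piecewise_eq_of_notMem _ _ _ hz, piecewise_eq_of_notMem _ _ _ (mt hzw'.2 hz)] at hzw
    exact τ.injective hzw

section Permutations

variable [Fintype α]

namespace Equiv.Perm

noncomputable def piecewise (I : Finset α) (σ τ : Perm α) (h : I.image σ = I.image τ) : Perm α :=
  Equiv.ofBijective (I.piecewise σ τ) (piecewise_injective h).bijective_of_finite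

@[simp]
theorem coe_piecewise (I : Finset α) (σ τ : Perm α) (h : I.image σ = I.image τ) :
    ⇑(σ.piecewise I τ h) = I.piecewise σ τ := rfl

theorem image_piecewise (I : Finset α) (σ τ : Perm α) (h : I.image σ = I.image τ) :
    I.image (σ.piecewise I τ h) = I.image σ :=
  image_congr fun _ hz => by simp [piecewise_eq_of_mem _ _ _ (mem_coe.1 hz)]

end Equiv.Perm

def permsWithImage (I A : Finset α) : Finset (Perm α) := {σ | I.image σ = A}

theorem mem_permsWithImage {I A : Finset α} {σ : Perm α} :
    σ ∈ permsWithImage I A ↔ I.image σ = A := by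
  simp [permsWithImage]

theorem sum_permsWithImage_image {M : Type*} [AddCommMonoid M] (I A : Finset α) (τ : Perm α)
    (h : Perm α → M) :
    ∑ σ ∈ permsWithImage I (A.image τ), h σ = ∑ σ ∈ permsWithImage I A, h (τ * σ) := by
  refine (sum_nbij' (τ * ·) (τ⁻¹ * ·) (fun σ hσ => ?_) (fun σ hσ => ?_) (by simp) (by simp)
    fun _ _ => rfl).symm <;> rw [mem_permsWithImage] at hσ ⊢
  · rw [← hσ, image_image, Perm.coe_mul]
  · rw [Perm.coe_mul, ← image_image, hσ, image_image, ← Perm.coe_mul, inv_mul_cancel,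
      Perm.coe_one, image_id]

theorem card_permsWithImage {I A : Finset α} (h : #I = #A) :
    #(permsWithImage I A) = #(permsWithImage I I) := by
  obtain ⟨τ, hτ⟩ := Perm.exists_map_finset_eq I A h
  rw [map_eq_image, coe_toEmbedding] at hτ
  subst hτ
  rw [card_eq_sum_ones, card_eq_sum_ones]
  exact sum_permsWithImage_image I I τ _

/-- Among the permutations with `σ(I) = A`, the restrictions to `I` and to `J` are independent. -/
theorem card_mul_sum_permsWithImage_mul {R : Type*} [CommSemiring R] {I J : Finset α}
    (hIJ : Disjoint I J) (A : Finset α) (u : (I → α) → R) (v : (J → α) → R) :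
    #(permsWithImage I A) * ∑ σ ∈ permsWithImage I A, u (fun i => σ i) * v (fun j => σ j) =
      (∑ σ ∈ permsWithImage I A, u (fun i => σ i)) *
        ∑ σ ∈ permsWithImage I A, v (fun j => σ j) := by
  set F := permsWithImage I A
  have hF {p : Perm α × Perm α} (hp : p ∈ F ×ˢ F) : I.image p.1 = I.image p.2 := by
    rw [mem_permsWithImage.1 (mem_product.1 hp).1, mem_permsWithImage.1 (mem_product.1 hp).2]
  let T (p : Perm α × Perm α) (hp : p ∈ F ×ˢ F) : Perm α × Perm α :=
    (p.1.piecewise I p.2 (hF hp), p.2.piecewise I p.1 (hF hp).symm)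
  have hT (p) (hp : p ∈ F ×ˢ F) : T p hp ∈ F ×ˢ F := by
    simp only [T, F, mem_product, mem_permsWithImage, Perm.image_piecewise] at hp ⊢
    exact hp
  have hJ (j : J) : (j : α) ∉ I := disjoint_right.1 hIJ j.2
  calc _ = ∑ p ∈ F ×ˢ F, u (fun i => p.1 i) * v (fun j => p.1 j) := by
        rw [sum_product, mul_sum]
        simp only [sum_const, nsmul_eq_mul]
    _ = ∑ p ∈ F ×ˢ F, u (fun i => p.1 i) * v (fun j => p.2 j) := by
        refine sum_bij' T T hT hT ?_ ?_ ?_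
        · intro p hp
          ext z <;> by_cases hz : z ∈ I <;> simp [T, hz]
        · intro p hp
          ext z <;> by_cases hz : z ∈ I <;> simp [T, hz]
        · intro p hp
          simp [T, hJ]
    _ = _ := by rw [sum_product, sum_mul_sum]

theorem exchangeMonotoneOn_sum_permsWithImage [Preorder β] (x : α → β) (I : Finset α)
    (h : Perm α → ℝ) (hh : ∀ (σ : Perm α) a b, a ∈ I.image σ → b ∉ I.image σ → x a ≤ x b →
      h σ ≤ h (swap a b * σ)) :
    ExchangeMonotoneOn x univ (fun A => ∑ σ ∈ permsWithImage I A, h σ) := by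
  intro A a b _ ha _ hb hab
  simp only
  rw [← Finset.image_swap_of_mem_of_notMem ha hb, sum_permsWithImage_image]
  refine sum_le_sum fun σ hσ => ?_
  rw [mem_permsWithImage] at hσ
  exact hh σ a b (hσ ▸ ha) (hσ ▸ hb) hab

theorem factorial_mul_sum_perm_mul_le [LinearOrder β] (x : α → β) {I J : Finset α}
    (hIJ : Disjoint I J) {f : (I → β) → ℝ} {g : (J → β) → ℝ} (hf : Monotone f)
    (hg : Monotone g) :
    ((Fintype.card α).factorial : ℝ) * ∑ σ : Perm α, f (fun i => x (σ i)) * g (fun j => x (σ j)) ≤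
      (∑ σ : Perm α, f (fun i => x (σ i))) * ∑ σ : Perm α, g (fun j => x (σ j)) := by
  set P := (univ : Finset α).powersetCard #I
  have hmaps : ((univ : Finset (Perm α)) : Set (Perm α)).MapsTo (fun σ : Perm α => I.image σ) P :=
    fun σ _ => mem_powersetCard.2 ⟨subset_univ _, card_image_of_injective I σ.injective⟩
  have hfib (w : Perm α → ℝ) : ∑ σ, w σ = ∑ A ∈ P, ∑ σ ∈ permsWithImage I A, w σ :=
    (sum_fiberwise_of_maps_to hmaps w).symm
  have hcard {A} (hA : A ∈ P) : #I = #A := (mem_powersetCard.1 hA).2.symm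
  have hfact : (Fintype.card α).factorial = #P * #(permsWithImage I I) := by
    rw [← Fintype.card_perm, ← card_univ, card_eq_sum_card_fiberwise hmaps]
    exact (sum_congr rfl fun A hA => card_permsWithImage (hcard hA)).trans
      (by rw [sum_const, smul_eq_mul])
  have hJ (j : J) : (j : α) ∉ I := disjoint_right.1 hIJ j.2
  have hΦ := exchangeMonotoneOn_sum_permsWithImage x I (fun σ => f fun i => x (σ i))
    fun σ a b _ hb hab => hf fun i =>
      le_apply_swap hab (ne_of_mem_of_not_mem (mem_image_of_mem σ i.2) hb)
  have hΨ := exchangeMonotoneOn_sum_permsWithImage x I (fun σ => -g fun j => x (σ j))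
    fun σ a b ha _ hab => neg_le_neg <| hg fun j =>
      apply_swap_le hab fun h => hJ j (σ.injective.mem_finset_image.1 (h ▸ ha))
  have hcheb := hΦ.sum_mul_sum_le_card_mul_sum hΨ #I
  simp only [sum_neg_distrib, mul_neg, neg_le_neg_iff] at hcheb
  calc _ = (#P : ℝ) * ∑ A ∈ P, #(permsWithImage I A) *
        ∑ σ ∈ permsWithImage I A, f (fun i => x (σ i)) * g (fun j => x (σ j)) := by
        rw [hfact, hfib, Nat.cast_mul, mul_assoc, mul_sum]
        exact congrArg _ (sum_congr rfl fun A hA => by rw [card_permsWithImage (hcard hA)])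
    _ = _ := congrArg _ <| sum_congr rfl fun A _ => card_mul_sum_permsWithImage_mul hIJ A
          (fun r => f fun i => x (r i)) (fun r => g fun j => x (r j))
    _ ≤ _ := hcheb
    _ = _ := by rw [hfib, hfib]

theorem factorial_mul_sum_perm_mul_le_of_antitone [LinearOrder β] (x : α → β) {I J : Finset α}
    (hIJ : Disjoint I J) {f : (I → β) → ℝ} {g : (J → β) → ℝ} (hf : Antitone f)
    (hg : Antitone g) :
    ((Fintype.card α).factorial : ℝ) * ∑ σ : Perm α, f (fun i => x (σ i)) * g (fun j => x (σ j)) ≤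
      (∑ σ : Perm α, f (fun i => x (σ i))) * ∑ σ : Perm α, g (fun j => x (σ j)) :=
  factorial_mul_sum_perm_mul_le (β := βᵒᵈ) x hIJ (f := f) (g := g) (fun _ _ h => hf h)
    (fun _ _ h => hg h)

end Permutations

theorem PMF.integral_uniformOfFintype {Ω E : Type*} [Fintype Ω] [Nonempty Ω] [MeasurableSpace Ω]
    [MeasurableSingletonClass Ω] [NormedAddCommGroup E] [NormedSpace ℝ E] [CompleteSpace E]
    (h : Ω → E) :
    ∫ ω, h ω ∂(PMF.uniformOfFintype Ω).toMeasure = (Fintype.card Ω : ℝ)⁻¹ • ∑ ω, h ω := by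
  simp [PMF.integral_eq_sum, smul_sum]

theorem PMF.integral_mul_le_of_card_mul_sum_le {Ω : Type*} [Fintype Ω] [Nonempty Ω]
    [MeasurableSpace Ω] [MeasurableSingletonClass Ω] {u v : Ω → ℝ}
    (h : Fintype.card Ω * ∑ ω, u ω * v ω ≤ (∑ ω, u ω) * ∑ ω, v ω) :
    ∫ ω, u ω * v ω ∂(PMF.uniformOfFintype Ω).toMeasure ≤
      (∫ ω, u ω ∂(PMF.uniformOfFintype Ω).toMeasure) *
        ∫ ω, v ω ∂(PMF.uniformOfFintype Ω).toMeasure := by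
  simp only [integral_uniformOfFintype, smul_eq_mul]
  have hN : (0 : ℝ) < Fintype.card Ω := by exact_mod_cast Fintype.card_pos
  calc _ = (Fintype.card Ω : ℝ)⁻¹ ^ 2 * (Fintype.card Ω * ∑ ω, u ω * v ω) := by
        field_simp
    _ ≤ (Fintype.card Ω : ℝ)⁻¹ ^ 2 * ((∑ ω, u ω) * ∑ ω, v ω) := by gcongr
    _ = _ := by ring

theorem negAssoc_permutation_distribution_general (n : ℕ) (x : Fin n → ℝ) :
    letI : MeasurableSpace (Equiv.Perm (Fin n)) := ⊤
    NegAssoc (PMF.uniformOfFintype (Equiv.Perm (Fin n))).toMeasure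
      (fun (i : Fin n) (σ : Equiv.Perm (Fin n)) => x (σ i)) := by
  let : MeasurableSpace (Perm (Fin n)) := ⊤
  have : MeasurableSingletonClass (Perm (Fin n)) := ⟨fun _ => MeasurableSpace.measurableSet_top⟩
  intro I J hIJ f g hfg
  apply PMF.integral_mul_le_of_card_mul_sum_le
  rw [Fintype.card_perm]
  rcases hfg with ⟨hf, hg⟩ | ⟨hf, hg⟩
  · exact factorial_mul_sum_perm_mul_le x hIJ hf hg
  · exact factorial_mul_sum_perm_mul_le_of_antitone x hIJ hf hg

/-- A random vector distributed uniformly over all permutations of a fixed real vector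
has negatively associated coordinates. -/
theorem negAssoc_permutation_distribution (n : ℕ) (hn : 0 < n) (x : Fin n → ℝ) :
    letI : MeasurableSpace (Equiv.Perm (Fin n)) := ⊤
    NegAssoc (PMF.uniformOfFintype (Equiv.Perm (Fin n))).toMeasure
      (fun (i : Fin n) (σ : Equiv.Perm (Fin n)) => x (σ i)) :=
  negAssoc_permutation_distribution_general n x
end

section
/- Let X_1, ..., X_n be negatively associated random variables each taking values in {0,1}, and let Y = X_1 + ... + X_n. Then for any ε ≥ 0, P(Y > (1+ε)E[Y]) ≤ exp(-ε² E[Y] / (2+ε)). -/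
open MeasureTheory ProbabilityTheory Real

lemma mem_Icc_of_eq_zero_or_eq_one {x : ℝ} (h : x = 0 ∨ x = 1) : x ∈ Set.Icc 0 1 := by
  rcases h with rfl | rfl <;> simp

lemma sub_one_add_mul_log_one_add_le {ε : ℝ} (hε : 0 ≤ ε) :
    ε - (1 + ε) * log (1 + ε) ≤ -ε ^ 2 / (2 + ε) := by
  have hlog : 2 * ε / (ε + 2) ≤ log (1 + ε) := le_log_one_add_of_nonneg hε
  have hlower : (1 + ε) * (2 * ε / (ε + 2)) ≤ (1 + ε) * log (1 + ε) := by gcongr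
  have hsplit : ε - (1 + ε) * (2 * ε / (ε + 2)) = -ε ^ 2 / (2 + ε) := by
    field_simp
    ring
  linarith

section Chernoff

variable {Ω : Type*} [MeasurableSpace Ω] {μ : Measure Ω}

lemma mgf_le_exp_of_forall_eq_zero_or_eq_one [IsProbabilityMeasure μ] {Y : Ω → ℝ}
    (hY : Measurable Y) (h01 : ∀ ω, Y ω = 0 ∨ Y ω = 1) (t : ℝ) :
    mgf Y μ t ≤ exp ((exp t - 1) * μ[Y]) := by
  have hlin : ∀ ω, exp (t * Y ω) = 1 + (exp t - 1) * Y ω := fun ω => by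
    rcases h01 ω with h | h <;> simp [h]
  have hint : Integrable Y μ :=
    .of_mem_Icc 0 1 hY.aemeasurable <| ae_of_all _ fun ω => mem_Icc_of_eq_zero_or_eq_one (h01 ω)
  have hmgf : mgf Y μ t = 1 + (exp t - 1) * μ[Y] := by
    simp only [mgf, hlin]
    rw [integral_add (integrable_const 1) (hint.const_mul _), integral_const_mul]
    simp
  rw [hmgf, add_comm]
  exact add_one_le_exp _

lemma measureReal_lt_le_exp_of_mgf_log_one_add_le [IsFiniteMeasure μ] {Y : Ω → ℝ} {ε m : ℝ}
    (hε : 0 ≤ ε) (hm : 0 ≤ m) (hint : Integrable (fun ω => exp (log (1 + ε) * Y ω)) μ)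
    (hmgf : mgf Y μ (log (1 + ε)) ≤ exp (ε * m)) :
    μ.real {ω | (1 + ε) * m < Y ω} ≤ exp (-(ε ^ 2 * m) / (2 + ε)) := by
  have ht : 0 ≤ log (1 + ε) := log_nonneg (by linarith)
  have hexponent : (ε - (1 + ε) * log (1 + ε)) * m ≤ -(ε ^ 2 * m) / (2 + ε) := by
    have := mul_le_mul_of_nonneg_right (sub_one_add_mul_log_one_add_le hε) hm
    rwa [div_mul_eq_mul_div, neg_mul] at this
  calc μ.real {ω | (1 + ε) * m < Y ω}
      ≤ μ.real {ω | (1 + ε) * m ≤ Y ω} :=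
        measureReal_mono <| Set.ofPred_subset_ofPred.mpr fun _ => le_of_lt
    _ ≤ exp (-log (1 + ε) * ((1 + ε) * m)) * mgf Y μ (log (1 + ε)) :=
        measure_ge_le_exp_mul_mgf _ ht hint
    _ ≤ exp (-log (1 + ε) * ((1 + ε) * m)) * exp (ε * m) := by gcongr
    _ = exp ((ε - (1 + ε) * log (1 + ε)) * m) := by rw [← exp_add]; ring_nf
    _ ≤ exp (-(ε ^ 2 * m) / (2 + ε)) := exp_le_exp.mpr hexponent

end Chernoff

namespace NegAssoc

variable {Ω ι : Type*} [MeasurableSpace Ω] {μ : Measure Ω} {X : ι → Ω → ℝ} {t : ℝ}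

lemma mgf_add_sum_le (hX : NegAssoc μ X) (ht : 0 ≤ t) {a : ι} {s : Finset ι} (ha : a ∉ s) :
    mgf (fun ω => X a ω + ∑ i ∈ s, X i ω) μ t
      ≤ mgf (X a) μ t * mgf (fun ω => ∑ i ∈ s, X i ω) μ t := by
  have hf : Monotone fun v : ({a} : Finset ι) → ℝ =>
      exp (t * v ⟨a, Finset.mem_singleton_self a⟩) :=
    fun v w hvw => exp_le_exp.mpr (mul_le_mul_of_nonneg_left (hvw _) ht)
  have hg : Monotone fun v : s → ℝ => exp (t * ∑ j, v j) :=
    fun v w hvw => exp_le_exp.mpr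
      (mul_le_mul_of_nonneg_left (Finset.sum_le_sum fun j _ => hvw j) ht)
  have h := hX {a} s (Finset.disjoint_singleton_left.mpr ha) _ _ (.inl ⟨hf, hg⟩)
  have hs : ∀ ω, ∑ j : s, X j ω = ∑ i ∈ s, X i ω := fun ω => Finset.sum_coe_sort s (X · ω)
  simp only [hs] at h
  simpa only [mgf, mul_add, exp_add] using h

lemma mgf_sum_le_prod [IsZeroOrProbabilityMeasure μ] (hX : NegAssoc μ X) (ht : 0 ≤ t)
    (s : Finset ι) :
    mgf (fun ω => ∑ i ∈ s, X i ω) μ t ≤ ∏ i ∈ s, mgf (X i) μ t := by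
  classical
  induction s using Finset.induction_on with
  | empty => simp [mgf]
  | insert a s ha ih =>
    simp only [Finset.sum_insert ha, Finset.prod_insert ha]
    exact (hX.mgf_add_sum_le ht ha).trans (mul_le_mul_of_nonneg_left ih mgf_nonneg)

lemma mgf_sum_le_exp [IsProbabilityMeasure μ] (hX : NegAssoc μ X)
    (hmeas : ∀ i, Measurable (X i)) (h01 : ∀ i ω, X i ω = 0 ∨ X i ω = 1) (ht : 0 ≤ t)
    (s : Finset ι) :
    mgf (fun ω => ∑ i ∈ s, X i ω) μ t ≤ exp ((exp t - 1) * μ[fun ω => ∑ i ∈ s, X i ω]) := by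
  have hint : ∀ i, Integrable (X i) μ := fun i =>
    .of_mem_Icc 0 1 (hmeas i).aemeasurable <| ae_of_all _ fun ω =>
      mem_Icc_of_eq_zero_or_eq_one (h01 i ω)
  calc mgf (fun ω => ∑ i ∈ s, X i ω) μ t
      ≤ ∏ i ∈ s, mgf (X i) μ t := hX.mgf_sum_le_prod ht s
    _ ≤ ∏ i ∈ s, exp ((exp t - 1) * μ[X i]) :=
        Finset.prod_le_prod (fun _ _ => mgf_nonneg) fun i _ =>
          mgf_le_exp_of_forall_eq_zero_or_eq_one (hmeas i) (h01 i) t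
    _ = exp ((exp t - 1) * μ[fun ω => ∑ i ∈ s, X i ω]) := by
        rw [← exp_sum, ← Finset.mul_sum, integral_finsetSum _ fun i _ => hint i]

end NegAssoc

/-- Chernoff upper-tail bound for sums of negatively associated {0,1}-valued
random variables: `P(Y > (1+ε)E[Y]) ≤ exp(-ε² E[Y]/(2+ε))`. -/
theorem chernoff_upper_tail_NA {Ω : Type*} [MeasurableSpace Ω] (μ : Measure Ω)
    [IsProbabilityMeasure μ] {n : ℕ} (X : Fin n → Ω → ℝ)
    (hmeas : ∀ i, Measurable (X i))
    (h01 : ∀ i ω, X i ω = 0 ∨ X i ω = 1)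
    (hNA : NegAssoc μ X)
    (ε : ℝ) (hε : 0 ≤ ε) :
    (μ {ω | (1 + ε) * (∫ ω', ∑ i, X i ω' ∂μ) < ∑ i, X i ω}).toReal
      ≤ Real.exp (-(ε ^ 2 * (∫ ω', ∑ i, X i ω' ∂μ)) / (2 + ε)) := by
  have hX01 : ∀ i ω, X i ω ∈ Set.Icc 0 1 := fun i ω => mem_Icc_of_eq_zero_or_eq_one (h01 i ω)
  have ht : 0 ≤ log (1 + ε) := log_nonneg (by linarith)
  have hsum_le : ∀ ω, ∑ i, X i ω ≤ n := fun ω => by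
    simpa using Finset.sum_le_sum fun i (_ : i ∈ Finset.univ) => (hX01 i ω).2
  have hint : Integrable (fun ω => exp (log (1 + ε) * ∑ i, X i ω)) μ :=
    integrable_exp_mul_of_le _ n ht (Finset.measurable_sum _ fun i _ => hmeas i).aemeasurable
      (ae_of_all _ hsum_le)
  have hmgf := hNA.mgf_sum_le_exp hmeas h01 ht Finset.univ
  rw [exp_log (by linarith), add_sub_cancel_left] at hmgf
  exact measureReal_lt_le_exp_of_mgf_log_one_add_le hε
    (integral_nonneg fun ω => Finset.sum_nonneg fun i _ => (hX01 i ω).1) hint hmgf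
end

section
/- Consider a random bipartite graph with L left nodes and R right nodes, where each left node independently connects to d distinct right nodes chosen uniformly at random. Then the right node degrees Z_1, ..., Z_R are negatively associated. -/
open MeasureTheory ProbabilityTheory

/-!
Let `s` be a uniform `d`-subset of the right nodes and `I`, `J` disjoint sets of right nodes.
Given `n = #(s ∩ I)` and `m = #(s ∩ J)`, the traces `s ∩ I` and `s ∩ J` are independent uniform
`n`- and `m`-subsets, and the average of a monotone function over the `n`-subsets of `I` increases
with `n`. The pair `(n, m)` has weights `C(#I, n) C(#J, m) C(k, d - n - m)`, with `k` the number
of nodes outside `I ∪ J`; these are reverse regular of order two because binomial coefficients are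
log-concave, so a Chebyshev-type inequality makes monotone functions of `s ∩ I` and of `s ∩ J`
negatively correlated. This persists for independent copies `S_1, …, S_L` (average over the first
copy, then induct), and the degrees of the nodes in `I` are monotone functions of the traces
`S_l ∩ I`.
-/

open Finset
open scoped BigOperators ENNReal

theorem outer_mul_le_inner_mul {M : Type*} [CommMagma M] [Preorder M] {w : ℕ → M}
    (hw : ∀ s r, s ≤ r → w (r + 1) * w s ≤ w r * w (s + 1)) (β a b : ℕ) :
    w (β + a + b) * w β ≤ w (β + a) * w (β + b) := by
  induction a generalizing β b with
  | zero => rw [Nat.add_zero, mul_comm]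
  | succ a ih =>
    cases b with
    | zero => exact le_rfl
    | succ b =>
      calc w (β + (a + 1) + (b + 1)) * w β ≤ w (β + 1 + a + b) * w (β + 1) := by
            convert hw β (β + 1 + a + b) (by omega) using 3; omega
        _ ≤ w (β + (a + 1)) * w (β + (b + 1)) := by
            convert ih (β + 1) b using 3 <;> omega

theorem Nat.choose_succ_mul_choose_le (k : ℕ) {r s : ℕ} (h : s ≤ r) :
    k.choose (r + 1) * k.choose s ≤ k.choose r * k.choose (s + 1) := by
  refine Nat.le_of_mul_le_mul_right (c := (r + 1) * (s + 1)) ?_ (by positivity)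
  calc k.choose (r + 1) * k.choose s * ((r + 1) * (s + 1))
      = k.choose (r + 1) * (r + 1) * (k.choose s * (s + 1)) := by ring
    _ = k.choose r * (k - r) * (k.choose s * (s + 1)) := by rw [Nat.choose_succ_right_eq]
    _ ≤ k.choose r * (k - s) * (k.choose s * (r + 1)) := by gcongr
    _ = k.choose r * (k.choose (s + 1) * (s + 1)) * (r + 1) := by
        rw [Nat.choose_succ_right_eq]; ring
    _ = k.choose r * k.choose (s + 1) * ((r + 1) * (s + 1)) := by ring

/-- The number of ways to complete a `t`-set to a `d`-set with elements from `k` further ones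
(the `if` guards against truncated subtraction). -/
def fillCount (k d t : ℕ) : ℕ := if t ≤ d then k.choose (d - t) else 0

theorem fillCount_succ_mul_le (k d : ℕ) {r s : ℕ} (h : s ≤ r) :
    fillCount k d (r + 1) * fillCount k d s ≤ fillCount k d r * fillCount k d (s + 1) := by
  by_cases hr : r + 1 ≤ d
  · obtain ⟨i, rfl⟩ := Nat.exists_eq_add_of_le h
    obtain ⟨j, rfl⟩ := Nat.exists_eq_add_of_le hr
    simp only [fillCount, if_pos hr, if_pos (by omega : s ≤ s + i + 1 + j),
      if_pos (by omega : s + i ≤ s + i + 1 + j), if_pos (by omega : s + 1 ≤ s + i + 1 + j),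
      show s + i + 1 + j - (s + i + 1) = j by omega, show s + i + 1 + j - s = i + j + 1 by omega,
      show s + i + 1 + j - (s + i) = j + 1 by omega, show s + i + 1 + j - (s + 1) = i + j by omega]
    rw [mul_comm, mul_comm (k.choose (j + 1))]
    exact k.choose_succ_mul_choose_le (by omega)
  · rw [fillCount, if_neg hr, zero_mul]
    exact Nat.zero_le _

theorem fillCount_mul_fillCount_le (k d : ℕ) {n n' m m' : ℕ} (hn : n ≤ n') (hm : m ≤ m') :
    fillCount k d (n + m) * fillCount k d (n' + m') ≤
      fillCount k d (n + m') * fillCount k d (n' + m) := by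
  obtain ⟨a, rfl⟩ := Nat.exists_eq_add_of_le hn
  obtain ⟨b, rfl⟩ := Nat.exists_eq_add_of_le hm
  rw [mul_comm, show n + a + (m + b) = n + m + b + a by ring, show n + (m + b) = n + m + b by ring,
    show n + a + m = n + m + a by ring]
  exact outer_mul_le_inner_mul (fun s r h => fillCount_succ_mul_le k d h) (n + m) b a

theorem four_mul_sub_eq_sum_minor {ι κ : Type*} (A : Finset ι) (B : Finset κ) (u : ι → κ → ℝ)
    (Φ : ι → ℝ) (Ψ : κ → ℝ) :
    4 * ((∑ n ∈ A, ∑ m ∈ B, u n m * Φ n * Ψ m) * (∑ n ∈ A, ∑ m ∈ B, u n m) -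
        (∑ n ∈ A, ∑ m ∈ B, u n m * Φ n) * (∑ n ∈ A, ∑ m ∈ B, u n m * Ψ m)) =
      ∑ n ∈ A, ∑ n' ∈ A, ∑ m ∈ B, ∑ m' ∈ B,
        (Φ n - Φ n') * (Ψ m - Ψ m') * (u n m * u n' m' - u n m' * u n' m) := by
  have hfactor : ∀ f g : ι → κ → ℝ, ∑ n ∈ A, ∑ n' ∈ A, ∑ m ∈ B, ∑ m' ∈ B, f n m * g n' m' =
      (∑ n ∈ A, ∑ m ∈ B, f n m) * (∑ n ∈ A, ∑ m ∈ B, g n m) := by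
    intro f g
    simp_rw [sum_mul_sum]
  have hexpand : ∑ n ∈ A, ∑ n' ∈ A, ∑ m ∈ B, ∑ m' ∈ B,
      u n m * u n' m' * (Φ n - Φ n') * (Ψ m - Ψ m') =
      2 * ((∑ n ∈ A, ∑ m ∈ B, u n m * Φ n * Ψ m) * (∑ n ∈ A, ∑ m ∈ B, u n m) -
        (∑ n ∈ A, ∑ m ∈ B, u n m * Φ n) * (∑ n ∈ A, ∑ m ∈ B, u n m * Ψ m)) := by
    have : ∀ n n' m m', u n m * u n' m' * (Φ n - Φ n') * (Ψ m - Ψ m') =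
        u n m * Φ n * Ψ m * u n' m' - u n m * Φ n * (u n' m' * Ψ m') -
          u n m * Ψ m * (u n' m' * Φ n') + u n m * (u n' m' * Φ n' * Ψ m') := by
      intros; ring
    simp only [this, sum_add_distrib, sum_sub_distrib, hfactor]
    ring
  -- exchanging `m` and `m'` turns the second half of each minor into the first
  have hswap : ∑ n ∈ A, ∑ n' ∈ A, ∑ m ∈ B, ∑ m' ∈ B,
      u n m' * u n' m * (Φ n - Φ n') * (Ψ m' - Ψ m) = ∑ n ∈ A, ∑ n' ∈ A, ∑ m ∈ B, ∑ m' ∈ B,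
      u n m * u n' m' * (Φ n - Φ n') * (Ψ m - Ψ m') :=
    sum_congr rfl fun n _ => sum_congr rfl fun n' _ => sum_comm
  calc _ = (∑ n ∈ A, ∑ n' ∈ A, ∑ m ∈ B, ∑ m' ∈ B,
        u n m * u n' m' * (Φ n - Φ n') * (Ψ m - Ψ m')) + ∑ n ∈ A, ∑ n' ∈ A, ∑ m ∈ B, ∑ m' ∈ B,
        u n m' * u n' m * (Φ n - Φ n') * (Ψ m' - Ψ m) := by
        rw [hswap, hexpand]; ring
    _ = _ := by
      simp only [← sum_add_distrib]
      refine sum_congr rfl fun _ _ => sum_congr rfl fun _ _ => sum_congr rfl fun _ _ =>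
        sum_congr rfl fun _ _ => by ring

/-- Chebyshev's sum inequality for a weight `u` that is reverse regular of order two (`hu`). -/
theorem sum_mul_sum_le_of_reverseRegular {ι κ : Type*} [LinearOrder ι] [LinearOrder κ]
    {A : Finset ι} {B : Finset κ} {u : ι → κ → ℝ} {Φ : ι → ℝ} {Ψ : κ → ℝ}
    (hu : ∀ n ∈ A, ∀ n' ∈ A, ∀ m ∈ B, ∀ m' ∈ B, n ≤ n' → m ≤ m' →
      u n m * u n' m' ≤ u n m' * u n' m)
    (hΦ : MonotoneOn Φ A) (hΨ : MonotoneOn Ψ B) :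
    (∑ n ∈ A, ∑ m ∈ B, u n m * Φ n * Ψ m) * (∑ n ∈ A, ∑ m ∈ B, u n m) ≤
      (∑ n ∈ A, ∑ m ∈ B, u n m * Φ n) * (∑ n ∈ A, ∑ m ∈ B, u n m * Ψ m) := by
  have hterm : ∀ n ∈ A, ∀ n' ∈ A, ∀ m ∈ B, ∀ m' ∈ B,
      (Φ n - Φ n') * (Ψ m - Ψ m') * (u n m * u n' m' - u n m' * u n' m) ≤ 0 := by
    intro n hn n' hn' m hm m' hm'
    wlog hnn : n ≤ n' generalizing n n'
    · have := this n' hn' n hn (le_of_not_ge hnn)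
      linarith
    wlog hmm : m ≤ m' generalizing m m'
    · have := this m' hm' m hm (le_of_not_ge hmm)
      linarith
    refine mul_nonpos_of_nonneg_of_nonpos (mul_nonneg_of_nonpos_of_nonpos ?_ ?_) ?_
    · exact sub_nonpos.2 (hΦ hn hn' hnn)
    · exact sub_nonpos.2 (hΨ hm hm' hmm)
    · exact sub_nonpos.2 (hu n hn n' hn' m hm m' hm' hnn hmm)
  have hsum := sum_nonpos fun n hn => sum_nonpos fun n' hn' => sum_nonpos fun m hm =>
    sum_nonpos fun m' hm' => hterm n hn n' hn' m hm m' hm'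
  rw [← four_mul_sub_eq_sum_minor] at hsum
  linarith

section LevelAverage

variable {α : Type*}

noncomputable def levelAvg (I : Finset α) (φ : Finset α → ℝ) (n : ℕ) : ℝ :=
  (∑ a ∈ powersetCard n I, φ a) / (#I).choose n

theorem sum_powersetCard_eq_choose_mul_levelAvg {I : Finset α} {n : ℕ} (hn : n ≤ #I)
    (φ : Finset α → ℝ) : ∑ a ∈ powersetCard n I, φ a = (#I).choose n * levelAvg I φ n := by
  rw [levelAvg, mul_div_cancel₀]
  exact_mod_cast (Nat.choose_pos hn).ne'

theorem levelAvg_one {I : Finset α} {n : ℕ} (hn : n ≤ #I) : levelAvg I (fun _ => 1) n = 1 := by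
  rw [levelAvg, sum_const, card_powersetCard, nsmul_one, div_self]
  exact_mod_cast (Nat.choose_pos hn).ne'

variable [DecidableEq α]

theorem sum_sum_sdiff_insert_eq (I : Finset α) (n : ℕ) (g : Finset α → ℝ) :
    ∑ a ∈ powersetCard n I, ∑ x ∈ I \ a, g (insert x a) =
      (n + 1) * ∑ b ∈ powersetCard (n + 1) I, g b := by
  calc _ = ∑ p ∈ (powersetCard n I).sigma (I \ ·), g (insert p.2 p.1) := (sum_sigma ..).symm
    _ = ∑ p ∈ (powersetCard (n + 1) I).sigma id, g p.1 := by
      refine sum_nbij' (fun p => ⟨insert p.2 p.1, p.2⟩) (fun p => ⟨p.1.erase p.2, p.2⟩)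
        ?_ ?_ ?_ ?_ fun _ _ => rfl
      · rintro ⟨a, x⟩ h
        simp only [mem_sigma, mem_powersetCard, mem_sdiff] at h ⊢
        obtain ⟨⟨haI, rfl⟩, hxI, hxa⟩ := h
        exact ⟨⟨insert_subset hxI haI, card_insert_of_notMem hxa⟩, mem_insert_self x a⟩
      · rintro ⟨b, x⟩ h
        simp only [mem_sigma, mem_powersetCard, mem_sdiff, id] at h ⊢
        obtain ⟨⟨hbI, hb⟩, hxb⟩ := h
        exact ⟨⟨(erase_subset x b).trans hbI, by rw [card_erase_of_mem hxb, hb]; rfl⟩,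
          hbI hxb, notMem_erase x b⟩
      · rintro ⟨a, x⟩ h
        simp only [mem_sigma, mem_sdiff] at h
        simp [erase_insert h.2.2]
      · rintro ⟨b, x⟩ h
        simp only [mem_sigma, id] at h
        simp [insert_erase h.2]
    _ = _ := by
      rw [sum_sigma, mul_sum]
      refine sum_congr rfl fun b hb => ?_
      simp only [id, sum_const, (mem_powersetCard.1 hb).2, nsmul_eq_mul]
      push_cast; ring

theorem levelAvg_le_levelAvg_succ {I : Finset α} {φ : Finset α → ℝ} (hφ : Monotone φ) {n : ℕ}
    (hn : n < #I) : levelAvg I φ n ≤ levelAvg I φ (n + 1) := by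
  have hchoose : ((#I).choose (n + 1) : ℝ) * (n + 1) = (#I).choose n * (#I - n : ℕ) := by
    exact_mod_cast Nat.choose_succ_right_eq #I n
  -- each `a` has `#I - n` one-point extensions, and `φ` can only grow along them
  have hcount : ((#I - n : ℕ) : ℝ) * ∑ a ∈ powersetCard n I, φ a ≤
      (n + 1) * ∑ b ∈ powersetCard (n + 1) I, φ b := by
    rw [← sum_sum_sdiff_insert_eq, mul_sum]
    refine sum_le_sum fun a ha => ?_
    rw [mem_powersetCard] at ha
    calc ((#I - n : ℕ) : ℝ) * φ a = ∑ x ∈ I \ a, φ a := by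
          rw [sum_const, card_sdiff_of_subset ha.1, ha.2, nsmul_eq_mul]
      _ ≤ ∑ x ∈ I \ a, φ (insert x a) := sum_le_sum fun x _ => hφ (subset_insert x a)
  have hCn : (0 : ℝ) < (#I).choose n := by exact_mod_cast Nat.choose_pos hn.le
  have hCn1 : (0 : ℝ) < (#I).choose (n + 1) := by exact_mod_cast Nat.choose_pos hn
  rw [levelAvg, levelAvg, div_le_div_iff₀ hCn hCn1]
  refine le_of_mul_le_mul_right ?_ (by positivity : (0 : ℝ) < n + 1)
  calc (∑ a ∈ powersetCard n I, φ a) * (#I).choose (n + 1) * (n + 1)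
      = (#I).choose n * (((#I - n : ℕ) : ℝ) * ∑ a ∈ powersetCard n I, φ a) := by
        rw [mul_assoc, hchoose]; ring
    _ ≤ (#I).choose n * ((n + 1) * ∑ b ∈ powersetCard (n + 1) I, φ b) := by gcongr
    _ = _ := by ring

theorem monotoneOn_levelAvg {I : Finset α} {φ : Finset α → ℝ} (hφ : Monotone φ) :
    MonotoneOn (levelAvg I φ) (Set.Iic #I) :=
  monotoneOn_of_le_add_one Set.ordConnected_Iic fun _ _ _ hn => levelAvg_le_levelAvg_succ hφ hn

end LevelAverage

section Traces

variable {α : Type*}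

theorem card_filter_powerset_add_card_eq (K : Finset α) (d t : ℕ) :
    #{c ∈ K.powerset | t + #c = d} = fillCount #K d t := by
  unfold fillCount
  split_ifs with h
  · rw [← card_powersetCard, powersetCard_eq_filter]
    exact congrArg card (filter_congr fun c _ => by omega)
  · rw [card_eq_zero, filter_eq_empty_iff]
    omega

variable [DecidableEq α] [Fintype α]

theorem card_filter_inter_eq_fillCount {I J a b : Finset α} (hIJ : Disjoint I J)
    (ha : a ⊆ I) (hb : b ⊆ J) (d : ℕ) :
    #{s ∈ powersetCard d univ | s ∩ I = a ∧ s ∩ J = b} = fillCount #(I ∪ J)ᶜ d (#a + #b) := by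
  rw [← card_filter_powerset_add_card_eq]
  refine card_nbij' (· \ (I ∪ J)) (a ∪ b ∪ ·) ?_ ?_ ?_ ?_
  · simp only [coe_filter, mem_powersetCard]
    rintro s ⟨⟨-, rfl⟩, rfl, rfl⟩
    refine ⟨mem_powerset.2 fun x => by simp, ?_⟩
    rw [← card_union_of_disjoint (hIJ.mono inter_subset_right inter_subset_right),
      ← inter_union_distrib_left, card_inter_add_card_sdiff]
  · simp only [coe_filter, mem_powerset, mem_powersetCard]
    rintro c ⟨hc, rfl⟩
    have habc : Disjoint (a ∪ b) c :=
      (subset_compl_iff_disjoint_left.1 hc).mono_left (union_subset_union ha hb)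
    refine ⟨⟨subset_univ _, ?_⟩, ?_, ?_⟩
    · rw [card_union_of_disjoint habc, card_union_of_disjoint (hIJ.mono ha hb)]
    all_goals
      ext x
      simp only [subset_iff, disjoint_left, mem_inter, mem_union, mem_compl] at *
      grind
  · simp only [coe_filter, mem_powersetCard]
    rintro s ⟨-, rfl, rfl⟩
    ext x
    simp only [mem_union, mem_inter, mem_sdiff]
    tauto
  · simp only [coe_filter, mem_powerset]
    rintro c ⟨hc, -⟩
    ext x
    simp only [subset_iff, mem_sdiff, mem_union, mem_compl] at *
    grind

theorem sum_powersetCard_inter_inter {I J : Finset α} (hIJ : Disjoint I J) (d : ℕ)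
    (h : Finset α → Finset α → ℝ) :
    ∑ s ∈ powersetCard d univ, h (s ∩ I) (s ∩ J) =
      ∑ a ∈ I.powerset, ∑ b ∈ J.powerset, (fillCount #(I ∪ J)ᶜ d (#a + #b) : ℝ) * h a b := by
  rw [← sum_fiberwise_of_maps_to' (t := I.powerset ×ˢ J.powerset)
    (g := fun s => (s ∩ I, s ∩ J)) (by simp) (fun p => h p.1 p.2), sum_product]
  refine sum_congr rfl fun a ha => sum_congr rfl fun b hb => ?_
  simp only [sum_const, nsmul_eq_mul, Prod.mk.injEq]
  rw [card_filter_inter_eq_fillCount hIJ (mem_powerset.1 ha) (mem_powerset.1 hb)]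

/-- The number of `d`-sets `s` with `#(s ∩ I) = n` and `#(s ∩ J) = m`. -/
def traceCount (I J : Finset α) (d n m : ℕ) : ℕ :=
  (#I).choose n * (#J).choose m * fillCount #(I ∪ J)ᶜ d (n + m)

theorem traceCount_mul_traceCount_le (I J : Finset α) (d : ℕ) {n n' m m' : ℕ} (hn : n ≤ n')
    (hm : m ≤ m') :
    traceCount I J d n m * traceCount I J d n' m' ≤
      traceCount I J d n m' * traceCount I J d n' m := by
  have := Nat.mul_le_mul_left ((#I).choose n * (#I).choose n' * (#J).choose m * (#J).choose m')
    (fillCount_mul_fillCount_le #(I ∪ J)ᶜ d hn hm)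
  simp only [traceCount]
  convert this using 1 <;> ring

theorem sum_powersetCard_inter_mul_inter {I J : Finset α} (hIJ : Disjoint I J) (d : ℕ)
    (φ ψ : Finset α → ℝ) :
    ∑ s ∈ powersetCard d univ, φ (s ∩ I) * ψ (s ∩ J) =
      ∑ n ∈ range (#I + 1), ∑ m ∈ range (#J + 1),
        traceCount I J d n m * levelAvg I φ n * levelAvg J ψ m := by
  rw [sum_powersetCard_inter_inter hIJ d fun a b => φ a * ψ b, sum_powerset]
  refine sum_congr rfl fun n hn => ?_
  rw [sum_comm, sum_powerset]
  refine sum_congr rfl fun m hm => ?_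
  calc ∑ b ∈ powersetCard m J, ∑ a ∈ powersetCard n I,
        (fillCount #(I ∪ J)ᶜ d (#a + #b) : ℝ) * (φ a * ψ b)
      = fillCount #(I ∪ J)ᶜ d (n + m) * (∑ a ∈ powersetCard n I, φ a) *
          ∑ b ∈ powersetCard m J, ψ b := by
        rw [sum_comm, mul_assoc, sum_mul_sum, mul_sum]
        refine sum_congr rfl fun a ha => ?_
        rw [mul_sum]
        refine sum_congr rfl fun b hb => ?_
        rw [(mem_powersetCard.1 ha).2, (mem_powersetCard.1 hb).2]
    _ = _ := by
        rw [sum_powersetCard_eq_choose_mul_levelAvg (Nat.lt_succ_iff.1 (mem_range.1 hn)),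
          sum_powersetCard_eq_choose_mul_levelAvg (Nat.lt_succ_iff.1 (mem_range.1 hm)),
          traceCount]
        push_cast; ring

end Traces

section NegCorrelation

variable {β γ δ : Type*} [Preorder γ] [Preorder δ]

def NegCorrelatedOn (K : Finset β) (p : β → γ) (q : β → δ) : Prop :=
  ∀ φ : γ → ℝ, ∀ ψ : δ → ℝ, Monotone φ → Monotone ψ →
    𝔼 x ∈ K, φ (p x) * ψ (q x) ≤ (𝔼 x ∈ K, φ (p x)) * 𝔼 x ∈ K, ψ (q x)

theorem negCorrelatedOn_of_card_mul_sum_le {K : Finset β} {p : β → γ} {q : β → δ}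
    (h : ∀ φ : γ → ℝ, ∀ ψ : δ → ℝ, Monotone φ → Monotone ψ →
      #K * ∑ x ∈ K, φ (p x) * ψ (q x) ≤ (∑ x ∈ K, φ (p x)) * ∑ x ∈ K, ψ (q x)) :
    NegCorrelatedOn K p q := by
  intro φ ψ hφ hψ
  simp only [expect_eq_sum_div_card, div_mul_div_comm]
  rcases K.eq_empty_or_nonempty with rfl | hK
  · simp
  have hN : (0 : ℝ) < #K := by exact_mod_cast hK.card_pos
  rw [div_le_div_iff₀ hN (by positivity)]
  calc (∑ x ∈ K, φ (p x) * ψ (q x)) * (#K * #K)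
      = #K * (#K * ∑ x ∈ K, φ (p x) * ψ (q x)) := by ring
    _ ≤ #K * ((∑ x ∈ K, φ (p x)) * ∑ x ∈ K, ψ (q x)) :=
        mul_le_mul_of_nonneg_left (h φ ψ hφ hψ) hN.le
    _ = _ := by ring

theorem expect_piFinset_succ [DecidableEq β] (K : Finset β) (n : ℕ)
    (f : (Fin (n + 1) → β) → ℝ) :
    𝔼 c ∈ Fintype.piFinset (fun _ : Fin (n + 1) => K), f c =
      𝔼 x ∈ K, 𝔼 c ∈ Fintype.piFinset (fun _ : Fin n => K), f (Fin.cons x c) := by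
  rw [← expect_product']
  refine (expect_equiv (Fin.consEquiv fun _ => β) (fun p => ?_) fun _ _ => rfl).symm
  simp [Fin.consEquiv, Fin.forall_fin_succ]

theorem NegCorrelatedOn.piFinset [DecidableEq β] {K : Finset β} {p : β → γ} {q : β → δ}
    (h : NegCorrelatedOn K p q) (n : ℕ) :
    NegCorrelatedOn (Fintype.piFinset fun _ : Fin n => K) (fun c => p ∘ c) (fun c => q ∘ c) := by
  induction n with
  | zero =>
    intro F G _ _
    simp [Fintype.piFinset_of_isEmpty]
  | succ n ih =>
    intro F G hF hG
    simp only [expect_piFinset_succ, Fin.comp_cons]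
    set P := Fintype.piFinset fun _ : Fin n => K
    let F' : (Fin n → γ) → ℝ := fun z => 𝔼 x ∈ K, F (Fin.cons (p x) z)
    let G' : (Fin n → δ) → ℝ := fun z => 𝔼 x ∈ K, G (Fin.cons (q x) z)
    have hF' : Monotone F' := fun _ _ hz =>
      expect_le_expect fun x _ => hF (Fin.cons_le_cons.2 ⟨le_rfl, hz⟩)
    have hG' : Monotone G' := fun _ _ hz =>
      expect_le_expect fun x _ => hG (Fin.cons_le_cons.2 ⟨le_rfl, hz⟩)
    calc 𝔼 x ∈ K, 𝔼 c ∈ P, F (Fin.cons (p x) (p ∘ c)) * G (Fin.cons (q x) (q ∘ c))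
        = 𝔼 c ∈ P, 𝔼 x ∈ K, F (Fin.cons (p x) (p ∘ c)) * G (Fin.cons (q x) (q ∘ c)) :=
          expect_comm ..
      _ ≤ 𝔼 c ∈ P, F' (p ∘ c) * G' (q ∘ c) := expect_le_expect fun c _ =>
          h _ _ (fun y y' hy => hF (Fin.cons_le_cons.2 ⟨hy, le_rfl⟩))
            (fun y y' hy => hG (Fin.cons_le_cons.2 ⟨hy, le_rfl⟩))
      _ ≤ (𝔼 c ∈ P, F' (p ∘ c)) * 𝔼 c ∈ P, G' (q ∘ c) := ih F' G' hF' hG'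
      _ = _ := by rw [expect_comm, expect_comm (s := P)]

end NegCorrelation

theorem negCorrelatedOn_powersetCard_inter {α : Type*} [Fintype α] [DecidableEq α]
    {I J : Finset α} (hIJ : Disjoint I J) (d : ℕ) :
    NegCorrelatedOn (powersetCard d univ) (· ∩ I) (· ∩ J) := by
  refine negCorrelatedOn_of_card_mul_sum_le fun φ ψ hφ hψ => ?_
  have hI : ∀ n ∈ range (#I + 1), n ≤ #I := fun n hn => Nat.lt_succ_iff.1 (mem_range.1 hn)
  have hJ : ∀ m ∈ range (#J + 1), m ≤ #J := fun m hm => Nat.lt_succ_iff.1 (mem_range.1 hm)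
  have hdecomp := sum_powersetCard_inter_mul_inter hIJ d
  have hchebyshev := sum_mul_sum_le_of_reverseRegular (A := range (#I + 1)) (B := range (#J + 1))
    (u := fun n m => (traceCount I J d n m : ℝ))
    (fun n _ n' _ m _ m' _ hn hm => by exact_mod_cast traceCount_mul_traceCount_le I J d hn hm)
    ((monotoneOn_levelAvg hφ).mono fun n hn => hI n hn)
    ((monotoneOn_levelAvg hψ).mono fun m hm => hJ m hm)
  have hW := hdecomp (fun _ => 1) (fun _ => 1)
  have hQ := hdecomp φ fun _ => 1
  have hR := hdecomp (fun _ => 1) ψ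
  simp only [mul_one, one_mul, sum_const, nsmul_one] at hW hQ hR
  rw [hW, hQ, hR, hdecomp, mul_comm]
  -- it remains to see that the level averages of the constant `1` are `1`
  convert hchebyshev using 2 <;>
    refine sum_congr rfl fun n hn => sum_congr rfl fun m hm => ?_ <;>
    simp [levelAvg_one, hI n hn, hJ m hm]

theorem integral_comp_eq_sum {Ω β : Type*} [MeasurableSpace Ω] {μ : Measure Ω}
    [IsFiniteMeasure μ] {T : Ω → β} {A : Finset β} (hTA : ∀ ω, T ω ∈ A)
    (hT : ∀ b ∈ A, MeasurableSet (T ⁻¹' {b})) (h : β → ℝ) :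
    ∫ ω, h (T ω) ∂μ = ∑ b ∈ A, μ.real (T ⁻¹' {b}) * h b := by
  have hsum : (fun ω => h (T ω)) = fun ω => ∑ b ∈ A, (T ⁻¹' {b}).indicator (fun _ => h b) ω := by
    funext ω
    rw [sum_eq_single_of_mem (T ω) (hTA ω), Set.indicator_of_mem (s := T ⁻¹' {T ω}) rfl]
    exact fun b _ hb => Set.indicator_of_notMem (Ne.symm hb) _
  rw [hsum, integral_finsetSum _ fun b hb => (integrable_const _).indicator (hT b hb)]
  exact sum_congr rfl fun b hb => by rw [integral_indicator_const _ (hT b hb), smul_eq_mul]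

theorem integral_comp_eq_expect_piFinset {Ω ι β : Type*} [MeasurableSpace Ω] {μ : Measure Ω}
    [IsFiniteMeasure μ] [Fintype ι] [DecidableEq ι] [DecidableEq β] {S : ι → Ω → β}
    {K : Finset β} (hmeas : ∀ i b, MeasurableSet {ω | S i ω = b})
    (hindep : iIndepFun (m := fun _ => ⊤) S μ) (hK : ∀ i ω, S i ω ∈ K)
    (hunif : ∀ i, ∀ b ∈ K, μ {ω | S i ω = b} = (#K : ℝ≥0∞)⁻¹) (h : (ι → β) → ℝ) :
    ∫ ω, h (fun i => S i ω) ∂μ = 𝔼 c ∈ Fintype.piFinset fun _ : ι => K, h c := by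
  have hfiber : ∀ c : ι → β, (fun ω i => S i ω) ⁻¹' {c} = ⋂ i, S i ⁻¹' {c i} := fun c => by
    ext; simp [funext_iff]
  rw [integral_comp_eq_sum (A := Fintype.piFinset fun _ => K)
    (fun ω => Fintype.mem_piFinset.2 fun i => hK i ω)
    (fun c _ => hfiber c ▸ .iInter fun i => hmeas i (c i)), expect_eq_sum_div_card, sum_div]
  refine sum_congr rfl fun c hc => ?_
  rw [hfiber, measureReal_def, hindep.meas_iInter fun i => ⟨{c i}, trivial, rfl⟩,
    Fintype.prod_congr (fun i => μ (S i ⁻¹' {c i})) _ fun i =>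
      hunif i (c i) (Fintype.mem_piFinset.1 hc i), prod_const,
    Fintype.card_piFinset, prod_const, card_univ, ENNReal.toReal_pow, ENNReal.toReal_inv,
    ENNReal.toReal_natCast, inv_pow, div_eq_inv_mul, Nat.cast_pow]

theorem negAssoc_of_monotone {Ω ι : Type*} [MeasurableSpace Ω] {μ : Measure Ω}
    {X : ι → Ω → ℝ}
    (h : ∀ (I J : Finset ι), Disjoint I J → ∀ (f : (↥I → ℝ) → ℝ) (g : (↥J → ℝ) → ℝ),
      Monotone f → Monotone g →
      ∫ ω, f (fun i => X i.1 ω) * g (fun j => X j.1 ω) ∂μ ≤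
        (∫ ω, f (fun i => X i.1 ω) ∂μ) * ∫ ω, g (fun j => X j.1 ω) ∂μ) :
    NegAssoc μ X := by
  rintro I J hIJ f g (⟨hf, hg⟩ | ⟨hf, hg⟩)
  · exact h I J hIJ f g hf hg
  · simpa only [Pi.neg_apply, neg_mul_neg, integral_neg] using h I J hIJ (-f) (-g) hf.neg hg.neg

def degreeVec {ι β : Type*} [Fintype ι] [DecidableEq β] (I : Finset β) (c : ι → Finset β) :
    ↥I → ℝ :=
  fun i => #{l | i.1 ∈ c l}

theorem monotone_degreeVec {ι β : Type*} [Fintype ι] [DecidableEq β] (I : Finset β) :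
    Monotone (degreeVec (ι := ι) I) := fun _ _ hc _ =>
  Nat.cast_le.2 <| card_le_card <| monotone_filter_right univ fun l _ hl => hc l hl

theorem degreeVec_inter {ι β : Type*} [Fintype ι] [DecidableEq β] (I : Finset β)
    (c : ι → Finset β) : degreeVec I (fun l => c l ∩ I) = degreeVec I c :=
  funext fun i => by simp [degreeVec, i.2]

theorem right_degrees_negAssoc_general {Ω : Type*} [MeasurableSpace Ω] (μ : Measure Ω)
    [IsProbabilityMeasure μ] (L R d : ℕ)
    (S : Fin L → Ω → Finset (Fin R))
    (hmeas : ∀ l s, MeasurableSet {ω | S l ω = s})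
    (hindep : iIndepFun (m := fun _ => ⊤) S μ)
    (hcard : ∀ l ω, (S l ω).card = d)
    (hunif : ∀ l (s : Finset (Fin R)), s.card = d →
      μ {ω | S l ω = s} = 1 / (R.choose d)) :
    NegAssoc μ (fun (j : Fin R) ω =>
      ((Finset.univ.filter (fun l => j ∈ S l ω)).card : ℝ)) := by
  refine negAssoc_of_monotone fun I J hIJ f g hf hg => ?_
  have hE := integral_comp_eq_expect_piFinset hmeas hindep (K := powersetCard d univ)
    (fun l ω => mem_powersetCard.2 ⟨subset_univ _, hcard l ω⟩) fun l s hs => by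
      rw [hunif l s (mem_powersetCard.1 hs).2, one_div, card_powersetCard, card_univ,
        Fintype.card_fin]
  have hNC := (negCorrelatedOn_powersetCard_inter hIJ d).piFinset L (f ∘ degreeVec I)
    (g ∘ degreeVec J) (hf.comp (monotone_degreeVec I)) (hg.comp (monotone_degreeVec J))
  simp only [Function.comp_def, degreeVec_inter] at hNC
  calc _ = _ := hE fun c => f (degreeVec I c) * g (degreeVec J c)
    _ ≤ _ := hNC
    _ = _ := by rw [← hE fun c => f (degreeVec I c), ← hE fun c => g (degreeVec J c)]; rfl

/-- In a random bipartite graph where each left node independently connects to a uniformly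
random `d`-element subset of the `R` right nodes, the right node degrees are negatively
associated. -/
theorem right_degrees_negAssoc {Ω : Type*} [MeasurableSpace Ω] (μ : Measure Ω)
    [IsProbabilityMeasure μ] (L R d : ℕ) (hL : 0 < L) (hR : 0 < R) (hd : 0 < d)
    (hdR : d ≤ R)
    (S : Fin L → Ω → Finset (Fin R))
    (hmeas : ∀ l s, MeasurableSet {ω | S l ω = s})
    (hindep : iIndepFun (m := fun _ => ⊤) S μ)
    (hcard : ∀ l ω, (S l ω).card = d)
    (hunif : ∀ l (s : Finset (Fin R)), s.card = d →
      μ {ω | S l ω = s} = 1 / (R.choose d)) :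
    NegAssoc μ (fun (j : Fin R) ω =>
      ((Finset.univ.filter (fun l => j ∈ S l ω)).card : ℝ)) :=
  right_degrees_negAssoc_general μ L R d S hmeas hindep hcard hunif
end

section
/- Let S ~ Bin(M, t/C(k,2)) with M = α·C(k,2), where α ≥ α* with α* = k^{−δ} − o(k^{−δ}) for a fixed δ ∈ (0,1), and let μ = α(k−1). Then for 1 ≤ t ≤ (k−1)/20 and sufficiently large k, P(S ≥ μ/5 | S ≥ 1) < exp(−k^{1−δ}/16). -/
open Filter Finset Real
set_option maxHeartbeats 1000000


-- Lemma A : n^n ≤ n! * e^n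
lemma aux_pow_le_factorial_mul_exp (n : ℕ) : (n : ℝ) ^ n ≤ (n.factorial : ℝ) * Real.exp n := by
  induction n with
  | zero => simp
  | succ n ih =>
    have hstep : ((n : ℝ) + 1) ^ n ≤ (n : ℝ) ^ n * Real.exp 1 := by
      rcases Nat.eq_zero_or_pos n with h | h
      · subst h; simpa using Real.one_le_exp zero_le_one
      · have hn : (0 : ℝ) < n := by exact_mod_cast h
        have h1 : (n : ℝ) + 1 = (n : ℝ) * (1 + 1 / n) := by field_simp
        have h2 : (1 : ℝ) + 1 / n ≤ Real.exp (1 / n) := by have := Real.add_one_le_exp (1/(n:ℝ)); linarith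
        have h3 : ((1 : ℝ) + 1 / n) ^ n ≤ Real.exp (1 / n) ^ n :=
          pow_le_pow_left₀ (by positivity) h2 n
        have h4 : Real.exp (1 / (n:ℝ)) ^ n = Real.exp 1 := by
          rw [← Real.exp_nat_mul]
          congr 1
          field_simp
        calc ((n : ℝ) + 1) ^ n = (n : ℝ) ^ n * ((1 : ℝ) + 1 / n) ^ n := by
              rw [h1, mul_pow]
          _ ≤ (n : ℝ) ^ n * Real.exp 1 := by
              rw [← h4]; exact mul_le_mul_of_nonneg_left h3 (by positivity)
    have hexp : Real.exp ((n : ℝ) + 1) = Real.exp n * Real.exp 1 := by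
      rw [← Real.exp_add]
    push_cast
    calc ((n : ℝ) + 1) ^ (n + 1) = ((n : ℝ) + 1) ^ n * ((n : ℝ) + 1) := pow_succ _ _
      _ ≤ ((n : ℝ) ^ n * Real.exp 1) * ((n : ℝ) + 1) :=
          mul_le_mul_of_nonneg_right hstep (by positivity)
      _ ≤ ((n.factorial : ℝ) * Real.exp n * Real.exp 1) * ((n : ℝ) + 1) := by
          have := Real.exp_pos 1
          have : (n:ℝ)^n * Real.exp 1 ≤ (n.factorial : ℝ) * Real.exp n * Real.exp 1 :=
            mul_le_mul_of_nonneg_right ih (Real.exp_pos 1).le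
          exact mul_le_mul_of_nonneg_right this (by positivity)
      _ = ((n+1).factorial : ℝ) * Real.exp ((n : ℝ) + 1) := by
          rw [hexp]; push_cast [Nat.factorial_succ]; ring

-- geometric sum bound
lemma aux_geom_sum_le {r : ℝ} (h0 : 0 ≤ r) (h1 : r < 1) (n : ℕ) :
    ∑ i ∈ Finset.range n, r ^ i ≤ 1 / (1 - r) := by
  have h1' : (0:ℝ) < 1 - r := by linarith
  rw [geom_sum_eq (by intro h; rw [h] at h1; exact lt_irrefl 1 h1 : r ≠ 1)]
  have heq : (r ^ n - 1) / (r - 1) = (1 - r ^ n) / (1 - r) := by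
    rw [← neg_div_neg_eq]; ring_nf
  rw [heq]
  gcongr
  have : 0 ≤ r ^ n := pow_nonneg h0 n
  linarith

lemma perk (δ : ℝ) (hδ0 : 0 < δ) (hδ1 : δ < 1) (αk εk : ℝ) (k t N : ℕ)
    (hk : 20 ≤ k) (hεk : εk ≤ 1/20)
    (hαlb : (k : ℝ) ^ (-δ) * (1 - εk) ≤ αk)
    (hα0 : 0 < αk) (hα1 : αk < 1)
    (hN : (N : ℝ) = αk * (k.choose 2))
    (ht1 : 1 ≤ t) (ht2 : (t : ℝ) ≤ ((k : ℝ) - 1) / 20)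
    (hlog : Real.log 24 + δ * Real.log k < (72/10000) * (k:ℝ) ^ (1 - δ)) :
    (∑ i ∈ Finset.range (N + 1),
        if αk * ((k : ℝ) - 1) / 5 ≤ (i : ℝ) ∧ 1 ≤ i then
          (N.choose i : ℝ) * ((t : ℝ) / (k.choose 2)) ^ i
            * (1 - (t : ℝ) / (k.choose 2)) ^ (N - i)
        else 0)
      / (∑ i ∈ Finset.range (N + 1),
        if 1 ≤ i then
          (N.choose i : ℝ) * ((t : ℝ) / (k.choose 2)) ^ i
            * (1 - (t : ℝ) / (k.choose 2)) ^ (N - i)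
        else 0)
    < Real.exp (-(k : ℝ) ^ (1 - δ) / 16) := by
  have hkR : (20 : ℝ) ≤ (k : ℝ) := by exact_mod_cast hk
  have hk0 : (0 : ℝ) < k := by linarith
  have hcK : ((k.choose 2 : ℕ) : ℝ) = (k : ℝ) * ((k : ℝ) - 1) / 2 := by
    rw [Nat.cast_choose_two]
  have hcKpos : (0 : ℝ) < ((k.choose 2 : ℕ) : ℝ) := by rw [hcK]; nlinarith
  set cK : ℝ := ((k.choose 2 : ℕ) : ℝ) with hcKdef
  set p : ℝ := (t : ℝ) / cK with hpdef
  set q : ℝ := 1 - p with hqdef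
  have htR : (1 : ℝ) ≤ (t : ℝ) := by exact_mod_cast ht1
  have hp0 : 0 < p := div_pos (by linarith) hcKpos
  have hple : p ≤ 1 / (10 * (k : ℝ)) := by
    rw [hpdef, div_le_div_iff₀ hcKpos (by positivity)]
    rw [hcK]
    nlinarith
  have hphalf : p ≤ 1/2 := by
    have : 1 / (10 * (k:ℝ)) ≤ 1/2 := by
      rw [div_le_div_iff₀ (by positivity) (by norm_num)]; nlinarith
    linarith
  have hq0 : 0 ≤ q := by rw [hqdef]; linarith
  have hq1 : q < 1 := by rw [hqdef]; linarith
  have hNp : (N : ℝ) * p = αk * t := by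
    rw [hN, hpdef]; field_simp
  have hNpos : 1 ≤ N := by
    by_contra h
    push_neg at h
    interval_cases N
    simp only [Nat.cast_zero] at hN
    nlinarith
  -- threshold
  set A : ℝ := αk * ((k : ℝ) - 1) / 5 with hAdef
  have hApos : 0 < A := by rw [hAdef]; nlinarith
  set a0 : ℕ := ⌈A⌉₊ with ha0def
  have hA0 : A ≤ (a0 : ℝ) := Nat.le_ceil A
  have ha0pos : 1 ≤ a0 := by
    rw [ha0def]
    exact Nat.one_le_iff_ne_zero.mpr (by positivity)
  have hNp4 : (N : ℝ) * p ≤ (a0 : ℝ) / 4 := by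
    rw [hNp]
    have h1 : αk * (t:ℝ) ≤ αk * (((k:ℝ) - 1) / 20) := by
      exact mul_le_mul_of_nonneg_left ht2 hα0.le
    have h2 : αk * (((k:ℝ) - 1) / 20) = A / 4 := by rw [hAdef]; ring
    linarith
  -- the weight function
  set w : ℕ → ℝ := fun i => (N.choose i : ℝ) * p ^ i * q ^ (N - i) with hwdef
  have hw_nonneg : ∀ i, 0 ≤ w i := by
    intro i; simp only [hwdef]; positivity
  have hsum_all : ∑ i ∈ Finset.range (N + 1), w i = 1 := by
    have h := add_pow p q N
    have h2 : ∑ i ∈ Finset.range (N + 1), w i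
        = ∑ i ∈ Finset.range (N + 1), p ^ i * q ^ (N - i) * (N.choose i : ℝ) := by
      refine Finset.sum_congr rfl fun i _ => by simp only [hwdef]; ring
    rw [h2, ← h, hqdef]
    norm_num
  set DEN : ℝ := ∑ i ∈ Finset.range (N + 1), (if 1 ≤ i then w i else 0) with hDENdef
  have hDEN_eq : DEN = 1 - q ^ N := by
    have h1 : ∀ i ∈ Finset.range (N + 1),
        (if 1 ≤ i then w i else 0) = w i - (if i = 0 then w i else 0) := by
      intro i _
      rcases Nat.eq_zero_or_pos i with h | h
      · subst h; simp
      · rw [if_pos (by omega : 1 ≤ i), if_neg (by omega : ¬ i = 0)]; ring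
    rw [hDENdef, Finset.sum_congr rfl h1, Finset.sum_sub_distrib,
      Finset.sum_ite_eq' (Finset.range (N + 1)) 0 w, hsum_all,
      if_pos (Finset.mem_range.mpr (by omega))]
    simp only [hwdef]
    simp
  have hqN : q ^ N ≤ Real.exp (-αk) := by
    have h1 : q ≤ Real.exp (-p) := by
      have := Real.add_one_le_exp (-p)
      rw [hqdef]; linarith
    have h2 : q ^ N ≤ Real.exp (-p) ^ N := pow_le_pow_left₀ hq0 h1 N
    have h3 : Real.exp (-p) ^ N = Real.exp (-((N:ℝ) * p)) := by
      rw [← Real.exp_nat_mul]; ring_nf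
    have h4 : Real.exp (-((N:ℝ)*p)) ≤ Real.exp (-αk) := by
      apply Real.exp_le_exp.mpr
      rw [hNp]
      nlinarith
    calc q ^ N ≤ Real.exp (-p) ^ N := h2
      _ = Real.exp (-((N:ℝ)*p)) := h3
      _ ≤ Real.exp (-αk) := h4
  have hDEN_lb : αk / 3 ≤ DEN := by
    rw [hDEN_eq]
    have h1 : (1 + αk) * Real.exp (-αk) ≤ 1 := by
      have h := Real.add_one_le_exp αk
      have he : 0 < Real.exp (-αk) := Real.exp_pos _
      have : (1 + αk) * Real.exp (-αk) ≤ Real.exp αk * Real.exp (-αk) := by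
        apply mul_le_mul_of_nonneg_right (by linarith) he.le
      rw [← Real.exp_add] at this
      simpa using this
    have h2 : Real.exp (-1) ≤ Real.exp (-αk) := Real.exp_le_exp.mpr (by linarith)
    have h3 : (1:ℝ)/3 ≤ Real.exp (-1) := by
      rw [Real.exp_neg]
      have he := Real.exp_one_lt_d9
      have hepos := Real.exp_pos 1
      have hinv : Real.exp 1 * (Real.exp 1)⁻¹ = 1 := mul_inv_cancel₀ (ne_of_gt hepos)
      have hipos : 0 < (Real.exp 1)⁻¹ := inv_pos.mpr hepos
      nlinarith
    have h4 : αk / 3 ≤ αk * Real.exp (-αk) := by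
      calc αk / 3 = αk * (1/3) := by ring
        _ ≤ αk * Real.exp (-1) := mul_le_mul_of_nonneg_left h3 hα0.le
        _ ≤ αk * Real.exp (-αk) := mul_le_mul_of_nonneg_left h2 hα0.le
    nlinarith [hqN]
  have hDENpos : 0 < DEN := lt_of_lt_of_le (by linarith) hDEN_lb
  -- numerator bound
  set r : ℝ := Real.exp 1 / 4 with hrdef
  have he9 := Real.exp_one_lt_d9
  have he0 := Real.exp_pos 1
  have hr0 : 0 < r := by rw [hrdef]; positivity
  have hr7 : r ≤ 7/10 := by rw [hrdef]; linarith
  have hterm : ∀ i ∈ Finset.range (N + 1),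
      (if A ≤ (i:ℝ) ∧ 1 ≤ i then w i else 0) ≤ (if a0 ≤ i then r ^ i else 0) := by
    intro i _
    by_cases hc : A ≤ (i:ℝ) ∧ 1 ≤ i
    · have hia : a0 ≤ i := by rw [ha0def]; exact Nat.ceil_le.mpr hc.1
      rw [if_pos hc, if_pos hia]
      have hiR : (1:ℝ) ≤ (i:ℝ) := by exact_mod_cast hc.2
      have hipos : (0:ℝ) < i := by linarith
      have hiaR : (a0:ℝ) ≤ (i:ℝ) := by exact_mod_cast hia
      have hq_le1 : q ^ (N - i) ≤ 1 := pow_le_one₀ hq0 (by linarith)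
      have hfac : (0:ℝ) < (i.factorial : ℝ) := by exact_mod_cast i.factorial_pos
      have hii : (0:ℝ) < (i:ℝ)^i := by positivity
      have step1 : w i ≤ (N.choose i : ℝ) * p ^ i := by
        simp only [hwdef]
        calc (N.choose i : ℝ) * p ^ i * q ^ (N - i)
            ≤ (N.choose i : ℝ) * p ^ i * 1 :=
              mul_le_mul_of_nonneg_left hq_le1 (by positivity)
          _ = (N.choose i : ℝ) * p ^ i := by ring
      have step2 : (N.choose i : ℝ) ≤ ((N:ℝ))^i / (i.factorial : ℝ) := by
        have h := Nat.choose_le_pow_div i N (α := ℝ)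
        exact h
      have step3 : (N.choose i : ℝ) * p ^ i ≤ ((N:ℝ)*p)^i / (i.factorial : ℝ) := by
        rw [mul_pow]
        calc (N.choose i : ℝ) * p ^ i ≤ ((N:ℝ))^i / (i.factorial:ℝ) * p ^ i :=
              mul_le_mul_of_nonneg_right step2 (by positivity)
          _ = (N:ℝ)^i * p^i / (i.factorial:ℝ) := by ring
      have step4 : ((N:ℝ)*p)^i / (i.factorial : ℝ) ≤ ((N:ℝ)*p*Real.exp 1 / (i:ℝ))^i := by
        have hA := aux_pow_le_factorial_mul_exp i
        have hNp0 : (0:ℝ) ≤ (N:ℝ)*p := by positivity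
        have hrhs : ((N:ℝ)*p*Real.exp 1 / (i:ℝ))^i
            = ((N:ℝ)*p)^i * (Real.exp 1)^i / ((i:ℝ))^i := by
          rw [div_pow, mul_pow, mul_pow]
        rw [hrhs]
        rw [div_le_div_iff₀ hfac hii]
        have hexpi : (Real.exp 1)^i = Real.exp (i:ℝ) := Real.exp_one_pow i
        calc ((N:ℝ)*p)^i * (i:ℝ)^i ≤ ((N:ℝ)*p)^i * ((i.factorial:ℝ) * Real.exp (i:ℝ)) :=
              mul_le_mul_of_nonneg_left hA (by positivity)
          _ = ((N:ℝ)*p)^i * (Real.exp 1)^i * (i.factorial:ℝ) := by rw [hexpi]; ring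
      have step6 : (N:ℝ)*p*Real.exp 1 / (i:ℝ) ≤ r := by
        rw [hrdef, div_le_div_iff₀ hipos (by norm_num : (0:ℝ) < 4)]
        have h1 : (N:ℝ)*p*4 ≤ (i:ℝ) := by linarith
        have h2 : ((N:ℝ)*p*4) * Real.exp 1 ≤ (i:ℝ) * Real.exp 1 :=
          mul_le_mul_of_nonneg_right h1 he0.le
        linarith [h2]
      have step7 : ((N:ℝ)*p*Real.exp 1 / (i:ℝ))^i ≤ r^i :=
        pow_le_pow_left₀ (by positivity) step6 i
      linarith [step1, step3, step4, step7]
    · rw [if_neg hc]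
      split
      · positivity
      · exact le_refl 0
  have hNUM_le : (∑ i ∈ Finset.range (N+1), if A ≤ (i:ℝ) ∧ 1 ≤ i then w i else 0)
      ≤ 4 * r ^ a0 := by
    have h1 : (∑ i ∈ Finset.range (N+1), if A ≤ (i:ℝ) ∧ 1 ≤ i then w i else 0)
        ≤ ∑ i ∈ Finset.range (N+1), (if a0 ≤ i then r ^ i else 0) :=
      Finset.sum_le_sum hterm
    have h2 : ∑ i ∈ Finset.range (N+1), (if a0 ≤ i then r ^ i else 0)
        = ∑ i ∈ Finset.Ico a0 (N+1), r ^ i := by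
      rw [← Finset.sum_filter]
      congr 1
      ext j
      simp only [Finset.mem_filter, Finset.mem_range, Finset.mem_Ico, Nat.lt_succ_iff]
      tauto
    have h3 : ∑ i ∈ Finset.Ico a0 (N+1), r ^ i ≤ r ^ a0 * (1/(1-r)) := by
      rw [Finset.sum_Ico_eq_sum_range]
      rw [Finset.sum_congr rfl (fun j _ => pow_add r a0 j), ← Finset.mul_sum]
      exact mul_le_mul_of_nonneg_left (aux_geom_sum_le hr0.le (by linarith) _) (by positivity)
    have h4 : r ^ a0 * (1/(1-r)) ≤ 4 * r ^ a0 := by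
      have h5 : (1:ℝ)/(1-r) ≤ 4 := by rw [div_le_iff₀ (by linarith)]; linarith
      have hra : (0:ℝ) ≤ r ^ a0 := by positivity
      calc r ^ a0 * (1/(1-r)) ≤ r ^ a0 * 4 := mul_le_mul_of_nonneg_left h5 hra
        _ = 4 * r ^ a0 := by ring
    linarith
  -- combine
  have hdiv : (∑ i ∈ Finset.range (N+1), if A ≤ (i:ℝ) ∧ 1 ≤ i then w i else 0) / DEN
      ≤ (4 * r ^ a0) / (αk / 3) := by
    apply div_le_div₀ (by positivity) hNUM_le (by linarith) hDEN_lb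
  have h12 : (4 * r ^ a0) / (αk / 3) = 12 * r ^ a0 / αk := by
    field_simp
    ring
  -- exponential estimates
  set x : ℝ := (k:ℝ) ^ (1 - δ) with hxdef
  have hx0 : 0 < x := by rw [hxdef]; exact Real.rpow_pos_of_pos hk0 _
  have hr1 : r < 1 := by linarith
  set B : ℝ := (k:ℝ) ^ (-δ) * (1 - εk) * ((k:ℝ) - 1) / 5 with hBdef
  have hkd0 : (0:ℝ) < (k:ℝ) ^ (-δ) := Real.rpow_pos_of_pos hk0 _
  have hBA : B ≤ A := by
    rw [hBdef, hAdef]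
    have h1 : (k:ℝ)^(-δ) * (1 - εk) * ((k:ℝ) - 1) ≤ αk * ((k:ℝ) - 1) :=
      mul_le_mul_of_nonneg_right hαlb (by linarith)
    linarith
  have hra0_le : r ^ (a0:ℕ) ≤ r ^ B := by
    rw [← Real.rpow_natCast r a0]
    exact Real.rpow_le_rpow_of_exponent_ge hr0 (by linarith) (by linarith)
  have hlogr : Real.log r ≤ -(38629/100000) := by
    rw [hrdef, Real.log_div (ne_of_gt he0) (by norm_num), Real.log_exp]
    have h4 : Real.log 4 = 2 * Real.log 2 := by
      rw [show (4:ℝ) = 2^2 by norm_num, Real.log_pow]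
      push_cast; ring
    have hl2 := Real.log_two_gt_d9
    rw [h4]
    linarith
  have hxk : (k:ℝ)^(-δ) * (k:ℝ) = x := by
    have h := (Real.rpow_add hk0 (-δ) 1).symm
    rw [Real.rpow_one] at h
    rw [hxdef, show (1:ℝ) - δ = -δ + 1 by ring]
    exact h
  have hBx : (361/2000) * x ≤ B := by
    have h1 : (19/20:ℝ) ≤ 1 - εk := by linarith
    have h2 : (19/20:ℝ) * (k:ℝ) ≤ (k:ℝ) - 1 := by linarith
    have h3 := mul_le_mul (mul_le_mul_of_nonneg_left h1 hkd0.le)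
      h2 (by positivity) (by positivity)
    rw [hBdef]
    have h4 : (k:ℝ)^(-δ) * (19/20) * ((19/20) * (k:ℝ)) = (361/400) * ((k:ℝ)^(-δ) * (k:ℝ)) := by ring
    rw [h4, hxk] at h3
    linarith
  have hBnn : (0:ℝ) ≤ B := le_trans (by positivity) hBx
  have hrB : r ^ B ≤ Real.exp (-(697/10000) * x) := by
    rw [Real.rpow_def_of_pos hr0]
    apply Real.exp_le_exp.mpr
    have h1 : Real.log r * B ≤ (-(38629/100000)) * B :=
      mul_le_mul_of_nonneg_right hlogr hBnn
    have h2 : (-(38629/100000):ℝ) * B ≤ (-(38629/100000)) * ((361/2000) * x) :=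
      mul_le_mul_of_nonpos_left hBx (by norm_num)
    have h3 : (-(38629/100000):ℝ) * ((361/2000) * x) ≤ -(697/10000) * x := by
      have hxnn : (0:ℝ) ≤ x := hx0.le
      linarith
    linarith
  have hαk_lb : (19/20) * (k:ℝ)^(-δ) ≤ αk := by
    have h1 : (k:ℝ)^(-δ) * (19/20) ≤ (k:ℝ)^(-δ) * (1 - εk) :=
      mul_le_mul_of_nonneg_left (by linarith) hkd0.le
    linarith
  have h12a : 12 * r ^ a0 / αk ≤ 12 * Real.exp (-(697/10000) * x) / ((19/20) * (k:ℝ)^(-δ)) := by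
    apply div_le_div₀ (by positivity) ?_ (by positivity) hαk_lb
    have := hra0_le.trans hrB
    linarith
  have hfin : 12 * Real.exp (-(697/10000) * x) / ((19/20) * (k:ℝ)^(-δ)) < Real.exp (-x/16) := by
    have hkdpos : (0:ℝ) < (k:ℝ) ^ (δ:ℝ) := Real.rpow_pos_of_pos hk0 _
    have hlhs : 12 * Real.exp (-(697/10000) * x) / ((19/20) * (k:ℝ)^(-δ))
        = (240/19) * ((k:ℝ)^(δ:ℝ) * Real.exp (-(697/10000) * x)) := by
      rw [Real.rpow_neg hk0.le]
      field_simp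
      ring
    rw [hlhs]
    have hy : (0:ℝ) ≤ (k:ℝ)^(δ:ℝ) * Real.exp (-(697/10000) * x) := by positivity
    have h1 : (240/19:ℝ) * ((k:ℝ)^(δ:ℝ) * Real.exp (-(697/10000) * x))
        ≤ 24 * ((k:ℝ)^(δ:ℝ) * Real.exp (-(697/10000) * x)) :=
      mul_le_mul_of_nonneg_right (by norm_num) hy
    have h2 : (24:ℝ) * ((k:ℝ)^(δ:ℝ) * Real.exp (-(697/10000) * x)) < Real.exp (-x/16) := by
      rw [Real.rpow_def_of_pos hk0, ← Real.exp_add,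
        show (24:ℝ) = Real.exp (Real.log 24) from (Real.exp_log (by norm_num)).symm,
        ← Real.exp_add]
      apply Real.exp_lt_exp.mpr
      have hlog' : Real.log 24 + δ * Real.log k < (72/10000) * x := by
        rw [hxdef]; exact hlog
      linarith
    linarith
  have main : (∑ i ∈ Finset.range (N+1), if A ≤ (i:ℝ) ∧ 1 ≤ i then w i else 0) / DEN
      < Real.exp (-x/16) := by
    calc (∑ i ∈ Finset.range (N+1), if A ≤ (i:ℝ) ∧ 1 ≤ i then w i else 0) / DEN
        ≤ (4 * r ^ a0) / (αk / 3) := hdiv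
      _ = 12 * r ^ a0 / αk := h12
      _ ≤ 12 * Real.exp (-(697/10000) * x) / ((19/20) * (k:ℝ)^(-δ)) := h12a
      _ < Real.exp (-x/16) := hfin
  exact main



/-- For `S ~ Bin(M, t/C(k,2))` with `M = α C(k,2)`, `α ≥ k^{−δ}(1−o(1))`, and
`μ = α(k−1)`: for `1 ≤ t ≤ (k−1)/20` and sufficiently large `k`,
`P(S ≥ μ/5 | S ≥ 1) < exp(−k^{1−δ}/16)`. -/
theorem conditional_singleton_bound (δ : ℝ) (hδ0 : 0 < δ) (hδ1 : δ < 1)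
    (α : ℕ → ℝ) (ε : ℕ → ℝ)
    (hε : Filter.Tendsto ε Filter.atTop (nhds 0))
    (hαlb : ∀ k : ℕ, (k : ℝ) ^ (-δ) * (1 - ε k) ≤ α k)
    (hα01 : ∀ k : ℕ, 0 < α k ∧ α k < 1)
    (M : ℕ → ℕ) (hM : ∀ k, (M k : ℝ) = α k * (k.choose 2)) :
    ∃ K : ℕ, ∀ k : ℕ, K ≤ k → ∀ t : ℕ, 1 ≤ t → (t : ℝ) ≤ ((k : ℝ) - 1) / 20 →
      (∑ i ∈ Finset.range (M k + 1),
          if α k * ((k : ℝ) - 1) / 5 ≤ (i : ℝ) ∧ 1 ≤ i then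
            ((M k).choose i : ℝ) * ((t : ℝ) / (k.choose 2)) ^ i
              * (1 - (t : ℝ) / (k.choose 2)) ^ (M k - i)
          else 0)
        / (∑ i ∈ Finset.range (M k + 1),
          if 1 ≤ i then
            ((M k).choose i : ℝ) * ((t : ℝ) / (k.choose 2)) ^ i
              * (1 - (t : ℝ) / (k.choose 2)) ^ (M k - i)
          else 0)
      < Real.exp (-(k : ℝ) ^ (1 - δ) / 16) := by
  have h1δ : (0:ℝ) < 1 - δ := by linarith
  -- eventually conditions
  have hev1 : ∀ᶠ k in Filter.atTop, ε k ≤ 1/20 := by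
    have := hε.eventually (eventually_le_nhds (by norm_num : (0:ℝ) < 1/20))
    exact this
  have hev2 : ∀ᶠ k : ℕ in Filter.atTop, 20 ≤ k := Filter.eventually_ge_atTop 20
  have hev3R : ∀ᶠ x : ℝ in Filter.atTop,
      Real.log 24 + δ * Real.log x < (72/10000) * x ^ (1 - δ) := by
    have hlo : Real.log =o[Filter.atTop] fun x : ℝ => x ^ (1 - δ) :=
      isLittleO_log_rpow_atTop h1δ
    have hb := hlo.bound (show (0:ℝ) < (36/10000)/δ by positivity)
    have hge : ∀ᶠ x : ℝ in Filter.atTop,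
        (Real.log 24) / (36/10000) + 1 ≤ x ^ (1 - δ) :=
      (tendsto_rpow_atTop h1δ).eventually_ge_atTop _
    have hx1 : ∀ᶠ x : ℝ in Filter.atTop, (1:ℝ) ≤ x := Filter.eventually_ge_atTop 1
    filter_upwards [hb, hge, hx1] with x hbx hgex hx1x
    have hxp : (0:ℝ) < x ^ (1 - δ) := Real.rpow_pos_of_pos (by linarith) _
    have hlx : 0 ≤ Real.log x := Real.log_nonneg hx1x
    rw [Real.norm_eq_abs, Real.norm_eq_abs, abs_of_nonneg hlx, abs_of_nonneg hxp.le] at hbx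
    have h1 : δ * Real.log x ≤ (36/10000) * x ^ (1 - δ) := by
      have := mul_le_mul_of_nonneg_left hbx hδ0.le
      calc δ * Real.log x ≤ δ * ((36/10000)/δ * x ^ (1-δ)) := this
        _ = (36/10000) * x ^ (1-δ) := by field_simp
    have h2 : Real.log 24 < (36/10000) * x ^ (1 - δ) := by
      have h3 : (36/10000:ℝ) * ((Real.log 24)/(36/10000) + 1) ≤ (36/10000) * x ^ (1-δ) :=
        mul_le_mul_of_nonneg_left hgex (by norm_num)
      have h4 : (36/10000:ℝ) * ((Real.log 24)/(36/10000) + 1) = Real.log 24 + 36/10000 := by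
        field_simp
      linarith
    linarith
  have hev3 : ∀ᶠ k : ℕ in Filter.atTop,
      Real.log 24 + δ * Real.log (k:ℝ) < (72/10000) * (k:ℝ) ^ (1 - δ) :=
    tendsto_natCast_atTop_atTop.eventually hev3R
  have hall := (hev1.and hev2).and hev3
  rw [Filter.eventually_atTop] at hall
  obtain ⟨K, hK⟩ := hall
  refine ⟨K, fun k hk t ht1 ht2 => ?_⟩
  obtain ⟨⟨hεk, hk20⟩, hlogk⟩ := hK k hk
  exact perk δ hδ0 hδ1 (α k) (ε k) k t (M k) hk20 hεk (hαlb k)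
    (hα01 k).1 (hα01 k).2 (hM k) ht1 ht2 hlogk
end

section
/- Suppose M right nodes are each independently connected to a uniformly random 2-element subset of k left nodes, with M = αC(k,2), α ≥ k^{−δ}(1−o(1)), δ ∈ (0,1). Let t_0 = (k−1)/20 and suppose the peeling process has run for t_0+1 iterations. Then, conditioned on the process not having terminated, the probability that some remaining left node is connected to no degree-1 right node is at most k·exp(−k^{1−δ}/25), for sufficiently large k. -/
/-!
Fix a remaining left node `l ∉ P`. A right node is a degree-1 neighbour of `l` exactly when
its pair is `{l, x}` for some `x ∈ P`; these `#P` pairs have total probability `p = #P / C(k,2)`,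
so by independence `l` has no such neighbour with probability `(1 - p) ^ M ≤ exp (-p M)`.
Since `p M = α (t₀ + 1) ≥ α k / 20 ≥ k ^ (1 - δ) / 25` once `ε k < 1 / 5`, a union bound over the
at most `k` remaining nodes finishes the proof.
-/

open MeasureTheory ProbabilityTheory Finset Filter

lemma Finset.card_image_pair_left {α : Type*} [DecidableEq α] (P : Finset α) (l : α) :
    #(P.image fun x => ({l, x} : Finset α)) = #P := by
  refine card_image_of_injective P fun x y hxy => ?_
  have hx : x ∈ ({l, y} : Finset α) := hxy ▸ mem_insert_of_mem (mem_singleton_self x)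
  have hy : y ∈ ({l, x} : Finset α) := hxy ▸ mem_insert_of_mem (mem_singleton_self y)
  simp only [mem_insert, mem_singleton] at hx hy
  grind

lemma one_sub_pow_le_exp_neg_mul {p : ℝ} (hp : p ≤ 1) (n : ℕ) :
    (1 - p) ^ n ≤ Real.exp (-(p * n)) :=
  calc (1 - p) ^ n ≤ Real.exp (-p) ^ n :=
        pow_le_pow_left₀ (by linarith) (Real.one_sub_le_exp_neg p) n
    _ = Real.exp (-(p * n)) := by rw [← Real.exp_nat_mul]; ring_nf

lemma eventually_rpow_one_sub_div_le {δ : ℝ} {α ε : ℕ → ℝ} (hε : Tendsto ε atTop (nhds 0))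
    (hα : ∀ k : ℕ, (k : ℝ) ^ (-δ) * (1 - ε k) ≤ α k) :
    ∀ᶠ k : ℕ in atTop, (k : ℝ) ^ (1 - δ) / 25 ≤ α k * (k / 20) := by
  filter_upwards [hε.eventually_lt_const (by norm_num : (0 : ℝ) < 1 / 5), eventually_gt_atTop 0]
    with k hεk hk
  have hk : (0 : ℝ) < k := Nat.cast_pos.2 hk
  calc (k : ℝ) ^ (1 - δ) / 25 = (k : ℝ) ^ (-δ) * (4 / 5) * (k / 20) := by
        rw [sub_eq_neg_add, Real.rpow_add hk, Real.rpow_one]; ring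
    _ ≤ (k : ℝ) ^ (-δ) * (1 - ε k) * (k / 20) := by gcongr; linarith
    _ ≤ α k * (k / 20) := by gcongr; exact hα k

section RandomPairs

variable {Ω ι α : Type*} [MeasurableSpace Ω] {μ : Measure Ω} [Fintype ι]

lemma ProbabilityTheory.iIndepFun.measureReal_forall_mem {β : Type*} {T : ι → Ω → β}
    (hT : iIndepFun (m := fun _ => ⊤) T μ) (S : Set β) {q : ℝ}
    (hq : ∀ j, μ.real (T j ⁻¹' S) = q) :
    μ.real {ω | ∀ j, T j ω ∈ S} = q ^ Fintype.card ι := by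
  have hinter : {ω | ∀ j, T j ω ∈ S} = ⋂ j ∈ (univ : Finset ι), T j ⁻¹' S := by ext; simp
  rw [hinter, measureReal_def,
    hT.measure_inter_preimage_eq_mul univ (sets := fun _ => S) fun _ _ => trivial,
    ENNReal.toReal_prod]
  simp [← measureReal_def, hq]

variable [DecidableEq α] [IsProbabilityMeasure μ] {T : ι → Ω → Finset α}
  (hmeas : ∀ j s, MeasurableSet {ω | T j ω = s}) (hindep : iIndepFun (m := fun _ => ⊤) T μ)
  {c : ℝ} (hunif : ∀ j s, #s = 2 → μ.real {ω | T j ω = s} = c)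
include hmeas hindep hunif

lemma measureReal_forall_not_pair_eq {P : Finset α} {l : α} (hl : l ∉ P) :
    μ.real {ω | ∀ j, ¬ ∃ x ∈ P, T j ω = {l, x}} = (1 - #P * c) ^ Fintype.card ι := by
  set F := P.image fun x => ({l, x} : Finset α)
  have hF : ∀ j, μ.real (T j ⁻¹' F) = #P * c := fun j => by
    rw [← sum_measureReal_preimage_singleton F fun s _ => hmeas j s, ← P.card_image_pair_left l,
      ← nsmul_eq_mul, ← sum_const]
    refine sum_congr rfl ?_
    simp only [mem_image]
    rintro _ ⟨x, hx, rfl⟩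
    exact hunif j _ (card_pair (ne_of_mem_of_not_mem hx hl).symm)
  have hFc : ∀ j, μ.real (T j ⁻¹' (↑F)ᶜ) = 1 - #P * c := fun j => by
    have hmF : MeasurableSet (T j ⁻¹' F) := by
      convert F.measurableSet_biUnion fun s _ => hmeas j s
      ext; simp
    rw [Set.preimage_compl, probReal_compl_eq_one_sub hmF, hF]
  convert hindep.measureReal_forall_mem _ hFc using 2
  ext
  simp [F, eq_comm]

lemma measureReal_exists_forall_not_pair_le [Fintype α] (P : Finset α) :
    μ.real {ω | ∃ l ∉ P, ∀ j, ¬ ∃ x ∈ P, T j ω = {l, x}}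
      ≤ #Pᶜ * (1 - #P * c) ^ Fintype.card ι := by
  have hunion : {ω | ∃ l ∉ P, ∀ j, ¬ ∃ x ∈ P, T j ω = {l, x}}
      = ⋃ l ∈ Pᶜ, {ω | ∀ j, ¬ ∃ x ∈ P, T j ω = {l, x}} := by ext; simp
  calc _ ≤ ∑ l ∈ Pᶜ, μ.real {ω | ∀ j, ¬ ∃ x ∈ P, T j ω = {l, x}} :=
        hunion ▸ measureReal_biUnion_finset_le _ _
    _ = #Pᶜ * (1 - #P * c) ^ Fintype.card ι := by
        rw [sum_congr rfl fun l hl =>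
          measureReal_forall_not_pair_eq hmeas hindep hunif (mem_compl.1 hl), sum_const,
          nsmul_eq_mul]

end RandomPairs

theorem peeling_all_recoverable_general (δ : ℝ)
    (α : ℕ → ℝ) (ε : ℕ → ℝ)
    (hε : Filter.Tendsto ε Filter.atTop (nhds 0))
    (hαlb : ∀ k : ℕ, (k : ℝ) ^ (-δ) * (1 - ε k) ≤ α k)
    (M : ℕ → ℕ) (hM : ∀ k, (M k : ℝ) = α k * (k.choose 2)) :
    ∃ K : ℕ, ∀ k : ℕ, K ≤ k →
    ∀ {Ω : Type} [MeasurableSpace Ω] (μ : Measure Ω), IsProbabilityMeasure μ →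
    ∀ (T : Fin (M k) → Ω → Finset (Fin k)),
      (∀ j s, MeasurableSet {ω | T j ω = s}) →
      iIndepFun (m := fun _ => ⊤) T μ →
      (∀ j ω, (T j ω).card = 2) →
      (∀ j (s : Finset (Fin k)), s.card = 2 → μ {ω | T j ω = s} = 1 / (k.choose 2)) →
    ∀ t₀ : ℕ, (t₀ : ℝ) = ((k : ℝ) - 1) / 20 →
    ∀ P : Finset (Fin k), P.card = t₀ + 1 →
      (μ {ω | ∃ l ∉ P, ∀ j, ¬ ∃ x ∈ P, T j ω = {l, x}}).toReal
        ≤ (k : ℝ) * Real.exp (-(k : ℝ) ^ (1 - δ) / 25) := by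
  obtain ⟨K, hK⟩ :=
    ((eventually_rpow_one_sub_div_le hε hαlb).and (eventually_ge_atTop 3)).exists_forall_of_atTop
  refine ⟨K, fun k hk Ω _ μ _ T hmeas hindep _ hunif t₀ ht₀ P hP => ?_⟩
  obtain ⟨hrate, hk3⟩ := hK k hk
  replace hk3 : (3 : ℝ) ≤ k := by exact_mod_cast hk3
  set C : ℝ := ((k.choose 2 : ℕ) : ℝ) with hC
  have hCpos : 0 < C := by rw [hC, Nat.cast_choose_two]; nlinarith
  have hP' : (#P : ℝ) = (k + 19) / 20 := by rw [hP]; push_cast; linarith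
  have hp : #P * C⁻¹ ≤ 1 := by
    rw [← div_eq_mul_inv, div_le_one hCpos, hP', hC, Nat.cast_choose_two]; nlinarith
  have hα : 0 ≤ α k := nonneg_of_mul_nonneg_left (hM k ▸ (M k).cast_nonneg) hCpos
  have hexponent : (k : ℝ) ^ (1 - δ) / 25 ≤ #P * C⁻¹ * M k := by
    rw [hM, mul_comm (α k), mul_assoc, inv_mul_cancel_left₀ hCpos.ne', mul_comm, hP']
    exact hrate.trans (by gcongr; linarith)
  calc μ.real {ω | ∃ l ∉ P, ∀ j, ¬ ∃ x ∈ P, T j ω = {l, x}}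
      ≤ #Pᶜ * (1 - #P * C⁻¹) ^ M k := by
        have hunif' : ∀ j s, #s = 2 → μ.real {ω | T j ω = s} = C⁻¹ := fun j s hs => by
          simp [measureReal_def, hunif j s hs, C]
        simpa using measureReal_exists_forall_not_pair_le hmeas hindep hunif' P
    _ ≤ k * Real.exp (-(#P * C⁻¹ * M k)) := by
        gcongr
        · exact_mod_cast card_le_univ Pᶜ |>.trans_eq (Fintype.card_fin k)
        · exact one_sub_pow_le_exp_neg_mul hp _
    _ ≤ k * Real.exp (-(k : ℝ) ^ (1 - δ) / 25) := by
        gcongr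
        rw [neg_div]
        exact neg_le_neg hexponent

/-- After `t₀ + 1` peeling iterations (with `t₀ = (k−1)/20`) on the bipartite graph in
which each of `M = α C(k,2)` right nodes independently connects to a uniformly random
2-element subset of `k` left nodes (`α ≥ k^{−δ}(1−o(1))`), the probability that some
remaining left node is connected to no degree-1 right node (i.e. is paired with the
peeled set `P` by no right node) is at most `k exp(−k^{1−δ}/25)`, for sufficiently
large `k`. -/
theorem peeling_all_recoverable (δ : ℝ) (hδ0 : 0 < δ) (hδ1 : δ < 1)
    (α : ℕ → ℝ) (ε : ℕ → ℝ)
    (hε : Filter.Tendsto ε Filter.atTop (nhds 0))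
    (hαlb : ∀ k : ℕ, (k : ℝ) ^ (-δ) * (1 - ε k) ≤ α k)
    (hα01 : ∀ k : ℕ, 0 < α k ∧ α k < 1)
    (M : ℕ → ℕ) (hM : ∀ k, (M k : ℝ) = α k * (k.choose 2)) :
    ∃ K : ℕ, ∀ k : ℕ, K ≤ k →
    ∀ {Ω : Type} [MeasurableSpace Ω] (μ : Measure Ω), IsProbabilityMeasure μ →
    ∀ (T : Fin (M k) → Ω → Finset (Fin k)),
      (∀ j s, MeasurableSet {ω | T j ω = s}) →
      iIndepFun (m := fun _ => ⊤) T μ →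
      (∀ j ω, (T j ω).card = 2) →
      (∀ j (s : Finset (Fin k)), s.card = 2 → μ {ω | T j ω = s} = 1 / (k.choose 2)) →
    ∀ t₀ : ℕ, (t₀ : ℝ) = ((k : ℝ) - 1) / 20 →
    ∀ P : Finset (Fin k), P.card = t₀ + 1 →
      (μ {ω | ∃ l ∉ P, ∀ j, ¬ ∃ x ∈ P, T j ω = {l, x}}).toReal
        ≤ (k : ℝ) * Real.exp (-(k : ℝ) ^ (1 - δ) / 25) :=
  peeling_all_recoverable_general δ α ε hε hαlb M hM
end

section
/- Let |N_j| ~ Bin(ñ, d/R) where ñ = C(n,2)+n, R = d r k̃/(δ ln k), k̃ = C(k,2)+k, for fixed r ≥ 1, d ≥ 2, δ ∈ (0,1). Then P(|N_j| ≤ (δ/4)·n² ln k/(r k²)) ≤ exp(−(δ/7)·n² ln k/(r k²)), for sufficiently large n and k with k ≤ n. -/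
lemma two_tri (m : ℕ) : 2 * (m.choose 2 + m) = m * (m + 1) := by
  induction m with
  | zero => rfl
  | succ m ih =>
    have h : (m + 1).choose 2 = m + m.choose 2 := by
      rw [Nat.choose_succ_succ, Nat.choose_one_right]
    calc 2 * ((m + 1).choose 2 + (m + 1)) = 2 * (m.choose 2 + m) + 2 * (m + 1) := by
          rw [h]; ring
      _ = m * (m + 1) + 2 * (m + 1) := by rw [ih]
      _ = (m + 1) * (m + 1 + 1) := by ring

set_option maxHeartbeats 1000000 in
/-- Lower tail bound for `|N(j)| ~ Bin(ñ, d/R)` with `ñ = C(n,2)+n`,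
`R = d r k̃/(δ ln k)`, `k̃ = C(k,2)+k`: for sufficiently large `n, k` with `k ≤ n`,
`P(|N(j)| ≤ (δ/4) n² ln k/(r k²)) ≤ exp(−(δ/7) n² ln k/(r k²))`. -/
theorem bin_size_lower_tail (r d : ℕ) (hr : 1 ≤ r) (hd : 2 ≤ d)
    (δ : ℝ) (hδ0 : 0 < δ) (hδ1 : δ < 1) :
    ∃ K : ℕ, ∀ n k : ℕ, K ≤ k → k ≤ n →
    ∀ R : ℕ, (R : ℝ) = d * r * ((k.choose 2 + k : ℕ) : ℝ) / (δ * Real.log k) →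
    (∑ i ∈ Finset.range ((n.choose 2 + n) + 1),
        if (i : ℝ) ≤ δ / 4 * ((n : ℝ) ^ 2 * Real.log k / (r * (k : ℝ) ^ 2)) then
          ((n.choose 2 + n).choose i : ℝ) * ((d : ℝ) / R) ^ i
            * (1 - (d : ℝ) / R) ^ ((n.choose 2 + n) - i)
        else 0)
      ≤ Real.exp (-(δ / 7) * ((n : ℝ) ^ 2 * Real.log k / (r * (k : ℝ) ^ 2))) := by
  refine ⟨3, fun n k hk hkn R hR => ?_⟩
  set N := n.choose 2 + n with hNdef
  set L := Real.log k with hLdef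
  have hk3 : (3:ℝ) ≤ (k:ℝ) := by exact_mod_cast hk
  have hkn' : (k:ℝ) ≤ (n:ℝ) := by exact_mod_cast hkn
  have hk0 : (0:ℝ) < k := by linarith
  have hn0 : (0:ℝ) < n := by linarith
  have hr0 : (0:ℝ) < r := by exact_mod_cast hr
  have hd0 : (0:ℝ) < d := by positivity
  have hd0' : (0:ℝ) < (d:ℝ) := by
    have : (2:ℝ) ≤ d := by exact_mod_cast hd
    linarith
  have hL0 : 0 < L := Real.log_pos (by linarith)
  have hktr : ((k.choose 2 + k : ℕ) : ℝ) = (k:ℝ) * ((k:ℝ) + 1) / 2 := by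
    have h := two_tri k
    have h' : (k.choose 2 + k) * 2 = k * (k + 1) := by omega
    rw [eq_div_iff (by norm_num : (2:ℝ) ≠ 0)]
    exact_mod_cast h'
  have hNr : ((N:ℕ) : ℝ) = (n:ℝ) * ((n:ℝ) + 1) / 2 := by
    have h := two_tri n
    have h' : N * 2 = n * (n + 1) := by rw [hNdef]; omega
    rw [eq_div_iff (by norm_num : (2:ℝ) ≠ 0)]
    exact_mod_cast h' 
  have hkt0 : (0:ℝ) < ((k.choose 2 + k : ℕ) : ℝ) := by rw [hktr]; positivity
  have hR0 : (0:ℝ) < (R:ℝ) := by rw [hR]; positivity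
  set p := (d:ℝ) / R with hpdef
  have hp : p = δ * L / ((r:ℝ) * ((k.choose 2 + k : ℕ) : ℝ)) := by
    rw [hpdef, hR]
    rw [div_div_eq_mul_div]
    rw [div_eq_div_iff (by positivity) (by positivity)]
    ring
  have hp0 : 0 ≤ p := by rw [hp]; positivity
  have hp1 : p ≤ 1 := by
    rw [hp, div_le_one (by positivity)]
    have hlog : L ≤ (k:ℝ) - 1 := Real.log_le_sub_one_of_pos hk0
    have hkk : (k:ℝ) ≤ ((k.choose 2 + k : ℕ) : ℝ) := by
      rw [hktr]
      have := mul_le_mul_of_nonneg_left (by linarith : (2:ℝ) ≤ (k:ℝ)+1) hk0.le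
      linarith
    have h1 : δ * L ≤ 1 * L := mul_le_mul_of_nonneg_right hδ1.le hL0.le
    have h2 : (1:ℝ) ≤ (r:ℝ) := by exact_mod_cast hr
    have h3 : (1:ℝ) * ((k.choose 2 + k : ℕ) : ℝ) ≤ (r:ℝ) * ((k.choose 2 + k : ℕ) : ℝ) :=
      mul_le_mul_of_nonneg_right h2 hkt0.le
    linarith
  have hq0 : 0 ≤ 1 - p := by linarith
  set M := (n:ℝ) ^ 2 * L / ((r:ℝ) * (k:ℝ) ^ 2) with hMdef
  set t := δ / 4 * M with htdef
  set c := 1 - Real.exp (-1) with hcdef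
  have hc : (11:ℝ)/21 ≤ c := by
    have h1 : Real.exp (-1) = 1 / Real.exp 1 := by
      rw [Real.exp_neg]; ring
    have h2 : (2.7182818283 : ℝ) < Real.exp 1 := Real.exp_one_gt_d9
    have h3 : Real.exp (-1) < 10/21 := by
      rw [h1]
      rw [div_lt_div_iff₀ (Real.exp_pos 1) (by norm_num)]
      nlinarith
    rw [hcdef]; linarith
  have hc0 : 0 < c := by linarith
  -- Step 1: bound each term
  have step1 : (∑ i ∈ Finset.range (N + 1),
        if (i : ℝ) ≤ t then
          (N.choose i : ℝ) * p ^ i * (1 - p) ^ (N - i)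
        else 0)
      ≤ ∑ i ∈ Finset.range (N + 1),
          (p * Real.exp (-1)) ^ i * (1 - p) ^ (N - i) * (N.choose i : ℝ) * Real.exp t := by
    apply Finset.sum_le_sum
    intro i _
    by_cases hcond : (i : ℝ) ≤ t
    · rw [if_pos hcond]
      have hexp : (1:ℝ) ≤ Real.exp (-1) ^ i * Real.exp t := by
        rw [← Real.exp_nat_mul, ← Real.exp_add]
        calc (1:ℝ) = Real.exp 0 := (Real.exp_zero).symm
        _ ≤ _ := Real.exp_le_exp.mpr (by linarith)
      calc (N.choose i : ℝ) * p ^ i * (1 - p) ^ (N - i)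
          = ((N.choose i : ℝ) * p ^ i * (1 - p) ^ (N - i)) * 1 := by ring
        _ ≤ ((N.choose i : ℝ) * p ^ i * (1 - p) ^ (N - i)) * (Real.exp (-1) ^ i * Real.exp t) := by
            apply mul_le_mul_of_nonneg_left hexp
            positivity
        _ = (p * Real.exp (-1)) ^ i * (1 - p) ^ (N - i) * (N.choose i : ℝ) * Real.exp t := by
            rw [mul_pow]; ring
    · rw [if_neg hcond]
      positivity
  -- Step 2: binomial theorem
  have step2 : (∑ i ∈ Finset.range (N + 1),
          (p * Real.exp (-1)) ^ i * (1 - p) ^ (N - i) * (N.choose i : ℝ) * Real.exp t)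
      = (p * Real.exp (-1) + (1 - p)) ^ N * Real.exp t := by
    rw [add_pow, Finset.sum_mul]
  -- Step 3: 1 + x ≤ exp x
  have step3 : (p * Real.exp (-1) + (1 - p)) ^ N ≤ Real.exp ((N:ℝ) * (-(p * c))) := by
    have hbase : p * Real.exp (-1) + (1 - p) ≤ Real.exp (-(p * c)) := by
      calc p * Real.exp (-1) + (1 - p) = -(p * c) + 1 := by rw [hcdef]; ring
      _ ≤ Real.exp (-(p * c)) := Real.add_one_le_exp _
    calc (p * Real.exp (-1) + (1 - p)) ^ N ≤ (Real.exp (-(p * c))) ^ N := by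
          apply pow_le_pow_left₀ (by positivity) hbase
      _ = Real.exp ((N:ℝ) * (-(p * c))) := (Real.exp_nat_mul _ N).symm
  -- Step 4: final arithmetic
  have final : t + (N:ℝ) * (-(p * c)) ≤ -(δ / 7) * M := by
    have hfrac : (n:ℝ)^2/(k:ℝ)^2 * (11/28) ≤ ((n:ℝ)*((n:ℝ)+1))/((k:ℝ)*((k:ℝ)+1)) * c := by
      rw [div_mul_eq_mul_div, div_mul_eq_mul_div,
        div_le_div_iff₀ (by positivity) (by positivity)]
      have e1 : (11/28:ℝ)*((k:ℝ)+1) ≤ c * (k:ℝ) := by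
        have := mul_le_mul_of_nonneg_right hc hk0.le
        linarith
      calc (n:ℝ)^2 * (11/28) * ((k:ℝ)*((k:ℝ)+1))
          = ((11/28:ℝ)*((k:ℝ)+1)) * ((n:ℝ)^2*(k:ℝ)) := by ring
        _ ≤ (c * (k:ℝ)) * ((n:ℝ)^2*(k:ℝ)) := by
            apply mul_le_mul_of_nonneg_right e1 (by positivity)
        _ = c * ((n:ℝ)^2*(k:ℝ)^2) := by ring
        _ ≤ c * (((n:ℝ)*((n:ℝ)+1))*(k:ℝ)^2) := by
            apply mul_le_mul_of_nonneg_left _ hc0.le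
            have h1 : (n:ℝ)^2 ≤ (n:ℝ)*((n:ℝ)+1) := by nlinarith
            have h2 : (0:ℝ) ≤ (k:ℝ)^2 := by positivity
            exact mul_le_mul_of_nonneg_right h1 h2
        _ = (n:ℝ)*((n:ℝ)+1) * c * (k:ℝ)^2 := by ring
    have key : δ/4 * M + δ/7 * M ≤ (N:ℝ) * (p * c) := by
      have lhs_eq : δ/4 * M + δ/7 * M = (δ * L / r) * ((n:ℝ)^2/(k:ℝ)^2 * (11/28)) := by
        rw [hMdef]; ring
      have rhs_eq : (N:ℝ) * (p * c)
          = (δ * L / r) * (((n:ℝ)*((n:ℝ)+1))/((k:ℝ)*((k:ℝ)+1)) * c) := by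
        rw [hp, hNr, hktr]
        field_simp
      rw [lhs_eq, rhs_eq]
      apply mul_le_mul_of_nonneg_left hfrac (by positivity)
    linarith [key]
  calc (∑ i ∈ Finset.range (N + 1),
        if (i : ℝ) ≤ t then
          (N.choose i : ℝ) * p ^ i * (1 - p) ^ (N - i)
        else 0)
      ≤ (p * Real.exp (-1) + (1 - p)) ^ N * Real.exp t := by rw [← step2]; exact step1
    _ ≤ Real.exp ((N:ℝ) * (-(p * c))) * Real.exp t := by
        apply mul_le_mul_of_nonneg_right step3 (Real.exp_pos _).le
    _ = Real.exp (t + (N:ℝ) * (-(p * c))) := by rw [← Real.exp_add]; ring_nf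
    _ ≤ Real.exp (-(δ / 7) * M) := Real.exp_le_exp.mpr final
end
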